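/- arXiv:2504.20936 — 9 statements merged into one kernel-verified Lean document; each statement's English description precedes it below -/
import Mathlib

section
/- Let (P,∗,∘) be a pre-Poisson algebra over a field K. Define x·y := x∗y + y∗x and {x,y} := x∘y − y∘x. Then (P,·,{·,·}) is a Poisson algebra: · is commutative and associative, {·,·} is alternating and satisfies the Jacobi identity, and the Leibniz rule {x, y·z} = {x,y}·z + y·{x,z} holds for all x,y,z ∈ P. -/
/-!
The Zinbiel identity says that `mul (x · y) = mul x ∘ mul y` for the anticommutator
`x · y = mul x y + mul y x`; since `·` is commutative, the left multiplications `mul x` and `mul y`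
commute, and these two facts give associativity of `·`. The associator of a left pre-Lie product is
symmetric in its first two arguments, and summing it cyclically yields the Jacobi identity for
the commutator. The Leibniz rule is the sum of the two compatibility identities, one of them
taken twice with `y` and `z` exchanged.
-/

namespace LinearMap

variable {R M : Type*} [CommSemiring R]

section Zinbiel

variable [AddCommMonoid M] [Module R M] (mul : M →ₗ[R] M →ₗ[R] M)

theorem add_flip_apply_comm (x y : M) : (mul + mul.flip) x y = (mul + mul.flip) y x := by
  simp only [add_apply, flip_apply]
  exact add_comm _ _

variable {mul}

theorem zinbiel_left_comm (hZin : ∀ x y z : M, mul x (mul y z) = mul (mul x y + mul y x) z)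
    (x y z : M) : mul x (mul y z) = mul y (mul x z) := by
  rw [hZin x y z, hZin y x z, add_comm]

theorem zinbiel_add_flip_assoc
    (hZin : ∀ x y z : M, mul x (mul y z) = mul (mul x y + mul y x) z) (x y z : M) :
    (mul + mul.flip) ((mul + mul.flip) x y) z = (mul + mul.flip) x ((mul + mul.flip) y z) := by
  have hcomm := zinbiel_left_comm hZin
  simp only [add_apply, flip_apply]
  rw [← hZin x y z, ← hZin y z x, map_add, map_add, hcomm z x y, hcomm z y x]
  abel

end Zinbiel

variable [AddCommGroup M] [Module R M] {mul cir : M →ₗ[R] M →ₗ[R] M}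

theorem preLie_sub_flip_jacobi
    (hPre : ∀ x y z : M,
      cir (cir x y) z - cir x (cir y z) = cir (cir y x) z - cir y (cir x z))
    (x y z : M) :
    (cir - cir.flip) x ((cir - cir.flip) y z) + (cir - cir.flip) y ((cir - cir.flip) z x) +
      (cir - cir.flip) z ((cir - cir.flip) x y) = 0 := by
  simp only [sub_apply, flip_apply, map_sub] at hPre ⊢
  linear_combination (norm := abel) (- hPre x y z) - hPre y z x - hPre z x y

theorem prePoisson_leibniz
    (hC1 : ∀ x y z : M, mul (cir x y - cir y x) z = cir x (mul y z) - mul y (cir x z))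
    (hC2 : ∀ x y z : M, cir (mul x y + mul y x) z = mul x (cir y z) + mul y (cir x z))
    (x y z : M) :
    (cir - cir.flip) x ((mul + mul.flip) y z) =
      (mul + mul.flip) ((cir - cir.flip) x y) z + (mul + mul.flip) y ((cir - cir.flip) x z) := by
  simp only [add_apply, sub_apply, flip_apply, map_add, map_sub] at hC1 hC2 ⊢
  linear_combination (norm := abel) (- hC1 x y z) - hC1 x z y - hC2 y z x

end LinearMap

/-- The sub-adjacent operations of a pre-Poisson algebra form a
Poisson algebra. -/
theorem subadjacent_poisson_of_prePoisson
    {K : Type*} [Field K] {P : Type*} [AddCommGroup P] [Module K P]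
    (mul cir : P →ₗ[K] P →ₗ[K] P)
    (hZin : ∀ x y z : P, mul x (mul y z) = mul (mul x y + mul y x) z)
    (hPre : ∀ x y z : P,
      cir (cir x y) z - cir x (cir y z) = cir (cir y x) z - cir y (cir x z))
    (hC1 : ∀ x y z : P,
      mul (cir x y - cir y x) z = cir x (mul y z) - mul y (cir x z))
    (hC2 : ∀ x y z : P,
      cir (mul x y + mul y x) z = mul x (cir y z) + mul y (cir x z)) :
    ∀ d b : P → P → P,
      (∀ x y : P, d x y = mul x y + mul y x) →
      (∀ x y : P, b x y = cir x y - cir y x) →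
      (∀ x y : P, d x y = d y x) ∧
      (∀ x y z : P, d (d x y) z = d x (d y z)) ∧
      (∀ x : P, b x x = 0) ∧
      (∀ x y z : P, b x (b y z) + b y (b z x) + b z (b x y) = 0) ∧
      (∀ x y z : P, b x (d y z) = d (b x y) z + d y (b x z)) := by
  intro d b hd hb
  obtain rfl : d = fun x y => (mul + mul.flip) x y := funext₂ hd
  obtain rfl : b = fun x y => (cir - cir.flip) x y := funext₂ hb
  exact ⟨mul.add_flip_apply_comm, LinearMap.zinbiel_add_flip_assoc hZin,
    fun x => sub_self (cir x x), LinearMap.preLie_sub_flip_jacobi hPre,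
    LinearMap.prePoisson_leibniz hC1 hC2⟩
end

section
/- Let (P,·,{·,·}) be a Poisson algebra over a field K and let B: P → P be a linear map satisfying B(x)·B(y) = B(B(x)·y + x·B(y)) and {B(x),B(y)} = B({B(x),y} + {x,B(y)}) for all x,y ∈ P (a Rota-Baxter operator of weight zero). Define x∗y := B(x)·y and x∘y := {B(x),y}. Then (P,∗,∘) is a pre-Poisson algebra, and B is a homomorphism from its sub-adjacent Poisson algebra to (P,·,{·,·}): B(x∗y + y∗x) = B(x)·B(y) and B(x∘y − y∘x) = {B(x),B(y)} for all x,y ∈ P. -/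
/-!
A weight-zero Rota–Baxter operator `B` turns the symmetrisations of `x ∗ y = B x · y` and
`x ∘ y = {B x, y}` into preimages under `B` of the product and the bracket:
`B (x ∗ y + y ∗ x) = B x · B y` and `B (x ∘ y - y ∘ x) = {B x, B y}`. Each pre-Poisson axiom
then becomes an identity of the Poisson algebra evaluated at `B x`, `B y`, `z`: associativity
for the Zinbiel identity, the Jacobi identity for the pre-Lie identity, and the Leibniz rule
(in either argument of the bracket) for the two compatibilities.
-/

section PoissonIdentities

variable {R P : Type*} [CommSemiring R] [AddCommGroup P] [Module R P]
  (mul br : P →ₗ[R] P →ₗ[R] P)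

theorem bracket_bracket_eq_of_jacobi (halt : br.IsAlt)
    (hjac : ∀ x y z : P, br x (br y z) + br y (br z x) + br z (br x y) = 0) (a b z : P) :
    br (br a b) z = br a (br b z) - br b (br a z) := by
  have h := hjac a b z
  rw [← halt.neg a z, map_neg, ← halt.neg (br a b) z] at h
  linear_combination (norm := abel) -h

theorem bracket_mul_left_eq_of_leibniz (hcomm : ∀ x y : P, mul x y = mul y x) (halt : br.IsAlt)
    (hleib : ∀ x y z : P, br x (mul y z) = mul (br x y) z + mul y (br x z)) (a b z : P) :
    br (mul a b) z = mul a (br b z) + mul b (br a z) := by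
  rw [← halt.neg z, hleib, ← halt.neg a z, ← halt.neg b z, hcomm (-br a z)]
  simp only [map_neg]
  abel

end PoissonIdentities

section RotaBaxter

variable {R P : Type*} [CommSemiring R] [AddCommGroup P] [Module R P]
  (mul br : P →ₗ[R] P →ₗ[R] P) (B : P →ₗ[R] P)

theorem rotaBaxter_mul_symm (hcomm : ∀ x y : P, mul x y = mul y x)
    (hB : ∀ x y : P, mul (B x) (B y) = B (mul (B x) y + mul x (B y))) (x y : P) :
    B (mul (B x) y + mul (B y) x) = mul (B x) (B y) := by
  rw [hB, hcomm (B y)]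

theorem rotaBaxter_bracket_antisymm (halt : br.IsAlt)
    (hB : ∀ x y : P, br (B x) (B y) = B (br (B x) y + br x (B y))) (x y : P) :
    B (br (B x) y - br (B y) x) = br (B x) (B y) := by
  rw [hB, ← halt.neg (B y), sub_eq_add_neg]

variable {mul br B}

theorem zinbiel_of_rotaBaxter (hcomm : ∀ x y : P, mul x y = mul y x)
    (hassoc : ∀ x y z : P, mul (mul x y) z = mul x (mul y z))
    (hB : ∀ x y : P, mul (B x) (B y) = B (mul (B x) y + mul x (B y))) (x y z : P) :
    mul (B x) (mul (B y) z) = mul (B (mul (B x) y + mul (B y) x)) z := by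
  rw [rotaBaxter_mul_symm mul B hcomm hB, hassoc]

theorem preLie_of_rotaBaxter (halt : br.IsAlt)
    (hjac : ∀ x y z : P, br x (br y z) + br y (br z x) + br z (br x y) = 0)
    (hB : ∀ x y : P, br (B x) (B y) = B (br (B x) y + br x (B y))) (x y z : P) :
    br (B (br (B x) y)) z - br (B x) (br (B y) z) =
      br (B (br (B y) x)) z - br (B y) (br (B x) z) := by
  rw [sub_eq_sub_iff_sub_eq_sub, ← LinearMap.sub_apply, ← map_sub, ← map_sub,
    rotaBaxter_bracket_antisymm br B halt hB, bracket_bracket_eq_of_jacobi br halt hjac]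

theorem mul_bracket_compat_of_rotaBaxter (hcomm : ∀ x y : P, mul x y = mul y x) (halt : br.IsAlt)
    (hleib : ∀ x y z : P, br x (mul y z) = mul (br x y) z + mul y (br x z))
    (hB : ∀ x y : P, br (B x) (B y) = B (br (B x) y + br x (B y))) (x y z : P) :
    mul (B (br (B x) y - br (B y) x)) z = br (B x) (mul (B y) z) - mul (B y) (br (B x) z) := by
  rw [rotaBaxter_bracket_antisymm br B halt hB, hleib, hcomm (br (B x) (B y)), add_sub_cancel_right]

theorem bracket_mul_compat_of_rotaBaxter (hcomm : ∀ x y : P, mul x y = mul y x)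
    (halt : br.IsAlt)
    (hleib : ∀ x y z : P, br x (mul y z) = mul (br x y) z + mul y (br x z))
    (hB : ∀ x y : P, mul (B x) (B y) = B (mul (B x) y + mul x (B y))) (x y z : P) :
    br (B (mul (B x) y + mul (B y) x)) z = mul (B x) (br (B y) z) + mul (B y) (br (B x) z) := by
  rw [rotaBaxter_mul_symm mul B hcomm hB, bracket_mul_left_eq_of_leibniz mul br hcomm halt hleib]

end RotaBaxter

/-- A Rota-Baxter operator of weight zero on a Poisson algebra
induces a pre-Poisson algebra, and `B` is a homomorphism from the sub-adjacent
Poisson algebra to the original one. -/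
theorem prePoisson_of_rotaBaxter_weight_zero
    {K : Type*} [Field K] {P : Type*} [AddCommGroup P] [Module K P]
    (pmul pbr : P →ₗ[K] P →ₗ[K] P)
    (hcomm : ∀ x y : P, pmul x y = pmul y x)
    (hassoc : ∀ x y z : P, pmul (pmul x y) z = pmul x (pmul y z))
    (halt : ∀ x : P, pbr x x = 0)
    (hjac : ∀ x y z : P, pbr x (pbr y z) + pbr y (pbr z x) + pbr z (pbr x y) = 0)
    (hleib : ∀ x y z : P, pbr x (pmul y z) = pmul (pbr x y) z + pmul y (pbr x z))
    (B : P →ₗ[K] P)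
    (hB1 : ∀ x y : P, pmul (B x) (B y) = B (pmul (B x) y + pmul x (B y)))
    (hB2 : ∀ x y : P, pbr (B x) (B y) = B (pbr (B x) y + pbr x (B y))) :
    ∀ s c : P → P → P,
      (∀ x y : P, s x y = pmul (B x) y) →
      (∀ x y : P, c x y = pbr (B x) y) →
      (∀ x y z : P, s x (s y z) = s (s x y + s y x) z) ∧
      (∀ x y z : P, c (c x y) z - c x (c y z) = c (c y x) z - c y (c x z)) ∧
      (∀ x y z : P, s (c x y - c y x) z = c x (s y z) - s y (c x z)) ∧
      (∀ x y z : P, c (s x y + s y x) z = s x (c y z) + s y (c x z)) ∧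
      (∀ x y : P, B (s x y + s y x) = pmul (B x) (B y)) ∧
      (∀ x y : P, B (c x y - c y x) = pbr (B x) (B y)) := by
  intro s c hs hc
  obtain rfl : s = fun x y => pmul (B x) y := funext₂ hs
  obtain rfl : c = fun x y => pbr (B x) y := funext₂ hc
  exact ⟨zinbiel_of_rotaBaxter hcomm hassoc hB1, preLie_of_rotaBaxter halt hjac hB2,
    mul_bracket_compat_of_rotaBaxter hcomm halt hleib hB2,
    bracket_mul_compat_of_rotaBaxter hcomm halt hleib hB1,
    rotaBaxter_mul_symm pmul B hcomm hB1, rotaBaxter_bracket_antisymm pbr B halt hB2⟩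
end

section
/- Let (V;ρ,μ,θ,γ) be a representation of a pre-Poisson algebra (P,∗,∘) over a field K, with V finite-dimensional. Define linear maps ρ',μ',θ',γ': P → End(V*) by (ρ'(x)ξ)(v) = ξ(ρ(x)v + μ(x)v), (μ'(x)ξ)(v) = −ξ(μ(x)v), (θ'(x)ξ)(v) = −ξ(θ(x)v − γ(x)v), and (γ'(x)ξ)(v) = ξ(γ(x)v), for x ∈ P, ξ ∈ V*, v ∈ V. Then (V*; ρ', μ', θ', γ') is a representation of (P,∗,∘). -/
/-!
Transposition `A ↦ Aᵀ` of endomorphisms of `V` is linear and reverses products, and the dual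
maps are `ρ' = (ρ + μ)ᵀ`, `μ' = -μᵀ`, `θ' = (γ - θ)ᵀ`, `γ' = γᵀ`. Hence each axiom for
`(ρ', μ', θ', γ')` is the transpose of an identity between operators on `V`, and that identity is
a signed sum of the axioms for `(ρ, μ, θ, γ)`.
-/

open Module

structure IsPrePoissonRep {R P W : Type*} [Semiring R] [AddCommGroup P] [AddCommGroup W]
    [Module R W] (mul cir : P → P → P) (ρ μ θ γ : P → Module.End R W) : Prop where
  rho_mul_rho (x y : P) : ρ x * ρ y = ρ (mul x y) + ρ (mul y x)
  rho_mul_mu (x y : P) : ρ x * μ y = μ (mul x y)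
  mu_mul (x y : P) : μ (mul x y) = μ y * ρ x + μ y * μ x
  theta_commutator (x y : P) : θ (cir x y - cir y x) = θ x * θ y - θ y * θ x
  theta_gamma (x y : P) : θ x * γ y - γ y * θ x = γ (cir x y) - γ y * γ x
  rho_commutator (x y : P) : ρ (cir x y - cir y x) = θ x * ρ y - ρ y * θ x
  mu_cir (x y : P) : μ (cir x y) = μ y * γ x - μ y * θ x + θ x * μ y
  mu_cir' (x y : P) : μ (cir x y) = γ y * ρ x + γ y * μ x - ρ x * γ y
  theta_anticommutator (x y : P) : θ (mul x y + mul y x) = ρ x * θ y + ρ y * θ x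
  gamma_mul (x y : P) : γ (mul x y) = ρ x * γ y + μ y * γ x - μ y * θ x

section

variable {R V : Type*} [CommRing R] [AddCommGroup V] [Module R V]

theorem Module.Dual.transpose_mul (A B : Module.End R V) :
    Dual.transpose (R := R) (A * B) = Dual.transpose B * Dual.transpose A :=
  Dual.transpose_comp A B

theorem Module.Dual.transpose_sub (A B : Module.End R V) :
    Dual.transpose (R := R) (A - B) =
      (Dual.transpose A - Dual.transpose B : Module.End R (Dual R V)) :=
  map_sub Dual.transpose A B

variable {P : Type*} [AddCommGroup P] [Module R P]

theorem IsPrePoissonRep.dual {mul cir : P → P → P} {ρ μ θ γ : P →ₗ[R] Module.End R V}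
    (h : IsPrePoissonRep mul cir ρ μ θ γ) :
    IsPrePoissonRep mul cir (fun x => Dual.transpose (ρ x + μ x)) (fun x => Dual.transpose (-μ x))
      (fun x => Dual.transpose (γ x - θ x)) (fun x => Dual.transpose (γ x)) where
  rho_mul_rho x y := by
    simp only [← Dual.transpose_mul, ← map_add Dual.transpose]
    congr 1
    linear_combination (norm := noncomm_ring) h.rho_mul_rho y x + h.rho_mul_mu y x - h.mu_mul x y
  rho_mul_mu x y := by
    simp only [← Dual.transpose_mul]
    congr 1
    linear_combination (norm := noncomm_ring) h.mu_mul x y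
  mu_mul x y := by
    simp only [← Dual.transpose_mul, ← map_add Dual.transpose]
    congr 1
    linear_combination (norm := noncomm_ring) h.rho_mul_mu x y
  theta_commutator x y := by
    simp only [← Dual.transpose_mul, ← Dual.transpose_sub, map_sub γ]
    congr 1
    linear_combination (norm := noncomm_ring)
      -h.theta_commutator x y - h.theta_gamma x y + h.theta_gamma y x
  theta_gamma x y := by
    simp only [← Dual.transpose_mul, ← Dual.transpose_sub]
    congr 1
    linear_combination (norm := noncomm_ring) h.theta_gamma x y
  rho_commutator x y := by
    simp only [← Dual.transpose_mul, ← Dual.transpose_sub, map_sub μ]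
    congr 1
    linear_combination (norm := noncomm_ring) h.rho_commutator x y + h.mu_cir x y - h.mu_cir' y x
  mu_cir x y := by
    simp only [← Dual.transpose_mul, ← Dual.transpose_sub, ← map_add Dual.transpose]
    congr 1
    linear_combination (norm := noncomm_ring) -h.mu_cir x y
  mu_cir' x y := by
    simp only [← Dual.transpose_mul, ← Dual.transpose_sub, ← map_add Dual.transpose]
    congr 1
    linear_combination (norm := noncomm_ring) -h.mu_cir' x y
  theta_anticommutator x y := by
    have hxy := h.rho_commutator x y
    have hyx := h.rho_commutator y x
    rw [map_sub] at hxy hyx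
    simp only [← Dual.transpose_mul, ← map_add Dual.transpose, map_add γ]
    congr 1
    linear_combination (norm := noncomm_ring)
      -h.theta_anticommutator x y + h.gamma_mul x y + h.gamma_mul y x - h.mu_cir x y - h.mu_cir y x
        + h.mu_cir' x y + h.mu_cir' y x - hxy - hyx
  gamma_mul x y := by
    simp only [← Dual.transpose_mul, ← Dual.transpose_sub, ← map_add Dual.transpose]
    congr 1
    linear_combination (norm := noncomm_ring) h.gamma_mul x y - h.mu_cir x y + h.mu_cir' x y

end

theorem dual_representation_of_prePoisson_general
    {K : Type*} [Field K] {P : Type*} [AddCommGroup P] [Module K P]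
    {V : Type*} [AddCommGroup V] [Module K V]
    (mul cir : P →ₗ[K] P →ₗ[K] P)
    (ρ μ θ γ : P →ₗ[K] V →ₗ[K] V)
    (h1 : ∀ (x y : P) (v : V), ρ x (ρ y v) = ρ (mul x y) v + ρ (mul y x) v)
    (h2 : ∀ (x y : P) (v : V), ρ x (μ y v) = μ (mul x y) v)
    (h3 : ∀ (x y : P) (v : V), μ (mul x y) v = μ y (ρ x v) + μ y (μ x v))
    (h4 : ∀ (x y : P) (v : V),
      θ (cir x y - cir y x) v = θ x (θ y v) - θ y (θ x v))
    (h5 : ∀ (x y : P) (v : V),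
      θ x (γ y v) - γ y (θ x v) = γ (cir x y) v - γ y (γ x v))
    (h6 : ∀ (x y : P) (v : V),
      ρ (cir x y - cir y x) v = θ x (ρ y v) - ρ y (θ x v))
    (h7 : ∀ (x y : P) (v : V),
      μ (cir x y) v = μ y (γ x v) - μ y (θ x v) + θ x (μ y v))
    (h8 : ∀ (x y : P) (v : V),
      μ (cir x y) v = γ y (ρ x v) + γ y (μ x v) - ρ x (γ y v))
    (h9 : ∀ (x y : P) (v : V),
      θ (mul x y + mul y x) v = ρ x (θ y v) + ρ y (θ x v))
    (h10 : ∀ (x y : P) (v : V),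
      γ (mul x y) v = ρ x (γ y v) + μ y (γ x v) - μ y (θ x v)) :
    ∀ ρ' μ' θ' γ' : P → Module.Dual K V → Module.Dual K V,
      (∀ (x : P) (ξ : Module.Dual K V) (v : V), ρ' x ξ v = ξ (ρ x v + μ x v)) →
      (∀ (x : P) (ξ : Module.Dual K V) (v : V), μ' x ξ v = - ξ (μ x v)) →
      (∀ (x : P) (ξ : Module.Dual K V) (v : V), θ' x ξ v = - ξ (θ x v - γ x v)) →
      (∀ (x : P) (ξ : Module.Dual K V) (v : V), γ' x ξ v = ξ (γ x v)) →
      (∀ (x y : P) (ξ : Module.Dual K V),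
        ρ' x (ρ' y ξ) = ρ' (mul x y) ξ + ρ' (mul y x) ξ) ∧
      (∀ (x y : P) (ξ : Module.Dual K V), ρ' x (μ' y ξ) = μ' (mul x y) ξ) ∧
      (∀ (x y : P) (ξ : Module.Dual K V),
        μ' (mul x y) ξ = μ' y (ρ' x ξ) + μ' y (μ' x ξ)) ∧
      (∀ (x y : P) (ξ : Module.Dual K V),
        θ' (cir x y - cir y x) ξ = θ' x (θ' y ξ) - θ' y (θ' x ξ)) ∧
      (∀ (x y : P) (ξ : Module.Dual K V),
        θ' x (γ' y ξ) - γ' y (θ' x ξ) = γ' (cir x y) ξ - γ' y (γ' x ξ)) ∧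
      (∀ (x y : P) (ξ : Module.Dual K V),
        ρ' (cir x y - cir y x) ξ = θ' x (ρ' y ξ) - ρ' y (θ' x ξ)) ∧
      (∀ (x y : P) (ξ : Module.Dual K V),
        μ' (cir x y) ξ = μ' y (γ' x ξ) - μ' y (θ' x ξ) + θ' x (μ' y ξ)) ∧
      (∀ (x y : P) (ξ : Module.Dual K V),
        μ' (cir x y) ξ = γ' y (ρ' x ξ) + γ' y (μ' x ξ) - ρ' x (γ' y ξ)) ∧
      (∀ (x y : P) (ξ : Module.Dual K V),
        θ' (mul x y + mul y x) ξ = ρ' x (θ' y ξ) + ρ' y (θ' x ξ)) ∧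
      (∀ (x y : P) (ξ : Module.Dual K V),
        γ' (mul x y) ξ = ρ' x (γ' y ξ) + μ' y (γ' x ξ) - μ' y (θ' x ξ)) := by
  intro ρ' μ' θ' γ' hρ' hμ' hθ' hγ'
  have hrep : IsPrePoissonRep (mul · ·) (cir · ·) ρ μ θ γ :=
    ⟨fun x y => LinearMap.ext (h1 x y), fun x y => LinearMap.ext (h2 x y),
      fun x y => LinearMap.ext (h3 x y), fun x y => LinearMap.ext (h4 x y),
      fun x y => LinearMap.ext (h5 x y), fun x y => LinearMap.ext (h6 x y),
      fun x y => LinearMap.ext (h7 x y), fun x y => LinearMap.ext (h8 x y),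
      fun x y => LinearMap.ext (h9 x y), fun x y => LinearMap.ext (h10 x y)⟩
  obtain rfl : ρ' = fun x => ⇑(Dual.transpose (R := K) (ρ x + μ x)) := by
    funext x ξ; ext v; simp [hρ', Dual.transpose_apply]
  obtain rfl : μ' = fun x => ⇑(Dual.transpose (R := K) (-μ x)) := by
    funext x ξ; ext v; simp [hμ', Dual.transpose_apply]
  obtain rfl : θ' = fun x => ⇑(Dual.transpose (R := K) (γ x - θ x)) := by
    funext x ξ; ext v; simp [hθ', Dual.transpose_apply]
  obtain rfl : γ' = fun x => ⇑(Dual.transpose (R := K) (γ x)) := by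
    funext x ξ; ext v; simp [hγ', Dual.transpose_apply]
  obtain ⟨c1, c2, c3, c4, c5, c6, c7, c8, c9, c10⟩ := hrep.dual
  exact ⟨fun x y => LinearMap.congr_fun (c1 x y), fun x y => LinearMap.congr_fun (c2 x y),
    fun x y => LinearMap.congr_fun (c3 x y), fun x y => LinearMap.congr_fun (c4 x y),
    fun x y => LinearMap.congr_fun (c5 x y), fun x y => LinearMap.congr_fun (c6 x y),
    fun x y => LinearMap.congr_fun (c7 x y), fun x y => LinearMap.congr_fun (c8 x y),
    fun x y => LinearMap.congr_fun (c9 x y), fun x y => LinearMap.congr_fun (c10 x y)⟩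

/-- The dual of a representation of a pre-Poisson algebra is again
a representation. -/
theorem dual_representation_of_prePoisson
    {K : Type*} [Field K] {P : Type*} [AddCommGroup P] [Module K P]
    {V : Type*} [AddCommGroup V] [Module K V] [FiniteDimensional K V]
    (mul cir : P →ₗ[K] P →ₗ[K] P)
    (hZin : ∀ x y z : P, mul x (mul y z) = mul (mul x y + mul y x) z)
    (hPre : ∀ x y z : P,
      cir (cir x y) z - cir x (cir y z) = cir (cir y x) z - cir y (cir x z))
    (hC1 : ∀ x y z : P,
      mul (cir x y - cir y x) z = cir x (mul y z) - mul y (cir x z))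
    (hC2 : ∀ x y z : P,
      cir (mul x y + mul y x) z = mul x (cir y z) + mul y (cir x z))
    (ρ μ θ γ : P →ₗ[K] V →ₗ[K] V)
    (h1 : ∀ (x y : P) (v : V), ρ x (ρ y v) = ρ (mul x y) v + ρ (mul y x) v)
    (h2 : ∀ (x y : P) (v : V), ρ x (μ y v) = μ (mul x y) v)
    (h3 : ∀ (x y : P) (v : V), μ (mul x y) v = μ y (ρ x v) + μ y (μ x v))
    (h4 : ∀ (x y : P) (v : V),
      θ (cir x y - cir y x) v = θ x (θ y v) - θ y (θ x v))
    (h5 : ∀ (x y : P) (v : V),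
      θ x (γ y v) - γ y (θ x v) = γ (cir x y) v - γ y (γ x v))
    (h6 : ∀ (x y : P) (v : V),
      ρ (cir x y - cir y x) v = θ x (ρ y v) - ρ y (θ x v))
    (h7 : ∀ (x y : P) (v : V),
      μ (cir x y) v = μ y (γ x v) - μ y (θ x v) + θ x (μ y v))
    (h8 : ∀ (x y : P) (v : V),
      μ (cir x y) v = γ y (ρ x v) + γ y (μ x v) - ρ x (γ y v))
    (h9 : ∀ (x y : P) (v : V),
      θ (mul x y + mul y x) v = ρ x (θ y v) + ρ y (θ x v))
    (h10 : ∀ (x y : P) (v : V),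
      γ (mul x y) v = ρ x (γ y v) + μ y (γ x v) - μ y (θ x v)) :
    ∀ ρ' μ' θ' γ' : P → Module.Dual K V → Module.Dual K V,
      (∀ (x : P) (ξ : Module.Dual K V) (v : V), ρ' x ξ v = ξ (ρ x v + μ x v)) →
      (∀ (x : P) (ξ : Module.Dual K V) (v : V), μ' x ξ v = - ξ (μ x v)) →
      (∀ (x : P) (ξ : Module.Dual K V) (v : V), θ' x ξ v = - ξ (θ x v - γ x v)) →
      (∀ (x : P) (ξ : Module.Dual K V) (v : V), γ' x ξ v = ξ (γ x v)) →
      (∀ (x y : P) (ξ : Module.Dual K V),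
        ρ' x (ρ' y ξ) = ρ' (mul x y) ξ + ρ' (mul y x) ξ) ∧
      (∀ (x y : P) (ξ : Module.Dual K V), ρ' x (μ' y ξ) = μ' (mul x y) ξ) ∧
      (∀ (x y : P) (ξ : Module.Dual K V),
        μ' (mul x y) ξ = μ' y (ρ' x ξ) + μ' y (μ' x ξ)) ∧
      (∀ (x y : P) (ξ : Module.Dual K V),
        θ' (cir x y - cir y x) ξ = θ' x (θ' y ξ) - θ' y (θ' x ξ)) ∧
      (∀ (x y : P) (ξ : Module.Dual K V),
        θ' x (γ' y ξ) - γ' y (θ' x ξ) = γ' (cir x y) ξ - γ' y (γ' x ξ)) ∧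
      (∀ (x y : P) (ξ : Module.Dual K V),
        ρ' (cir x y - cir y x) ξ = θ' x (ρ' y ξ) - ρ' y (θ' x ξ)) ∧
      (∀ (x y : P) (ξ : Module.Dual K V),
        μ' (cir x y) ξ = μ' y (γ' x ξ) - μ' y (θ' x ξ) + θ' x (μ' y ξ)) ∧
      (∀ (x y : P) (ξ : Module.Dual K V),
        μ' (cir x y) ξ = γ' y (ρ' x ξ) + γ' y (μ' x ξ) - ρ' x (γ' y ξ)) ∧
      (∀ (x y : P) (ξ : Module.Dual K V),
        θ' (mul x y + mul y x) ξ = ρ' x (θ' y ξ) + ρ' y (θ' x ξ)) ∧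
      (∀ (x y : P) (ξ : Module.Dual K V),
        γ' (mul x y) ξ = ρ' x (γ' y ξ) + μ' y (γ' x ξ) - μ' y (θ' x ξ)) :=
  dual_representation_of_prePoisson_general mul cir ρ μ θ γ h1 h2 h3 h4 h5 h6 h7 h8 h9 h10
end

section
/- Let (P,∗,∘) be a finite-dimensional pre-Poisson algebra over a field K, with sub-adjacent operations x·y := x∗y + y∗x and {x,y} := x∘y − y∘x. On the direct sum P ⊕ P* define (x+ξ)•(y+η) := x·y + ς(x)η + ς(y)ξ and ⟦x+ξ, y+η⟧ := {x,y} + ϱ(x)η − ϱ(y)ξ, where ς(x)η ∈ P* is the functional z ↦ η(x∗z) and ϱ(x)η ∈ P* is the functional z ↦ −η(x∘z). Then: (1) (P⊕P*, •, ⟦·,·⟧) is a Poisson algebra; (2) the bilinear form ω(x+ξ, y+η) := ξ(y) − η(x) is a symplectic structure on it; (3) P⊕0 and 0⊕P* are Poisson subalgebras. Hence (P⊕P*, •, ⟦·,·⟧, ω) is a phase space of the sub-adjacent Poisson algebra of (P,∗,∘). -/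
/-!
Every identity on `P ⊕ P*` splits into a `P`-component and a `P*`-component. The `P`-components
are the axioms of the sub-adjacent Poisson algebra; evaluated at a test vector, the
`P*`-components are again pre-Poisson identities (Zinbiel for associativity, pre-Lie for
Jacobi, the two compatibilities for Leibniz). Since `ς(x)` and `ϱ(x)` are, up to sign, the
transposes of `x ∗ ·` and `x ∘ ·`, the cyclicity of `ω` holds for any `∗` and `∘`;
nondegeneracy is the fact that the dual separates points.
-/

namespace PrePoisson

open Module

variable {R M : Type*} [CommRing R] [AddCommGroup M] [Module R M]

def phaseMul (mul : M →ₗ[R] M →ₗ[R] M) :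
    M × Dual R M →ₗ[R] M × Dual R M →ₗ[R] M × Dual R M :=
  LinearMap.mk₂ R
    (fun u v => (mul u.1 v.1 + mul v.1 u.1, v.2 ∘ₗ mul u.1 + u.2 ∘ₗ mul v.1))
    (fun u v w => by ext <;> simp only [Prod.fst_add, Prod.snd_add, map_add, LinearMap.add_apply,
        LinearMap.comp_apply] <;> abel)
    (fun c u v => by ext <;> simp [smul_add])
    (fun u v w => by ext <;> simp only [Prod.fst_add, Prod.snd_add, map_add, LinearMap.add_apply,
        LinearMap.comp_apply] <;> abel)
    (fun c u v => by ext <;> simp [smul_add])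

def phaseBracket (cir : M →ₗ[R] M →ₗ[R] M) :
    M × Dual R M →ₗ[R] M × Dual R M →ₗ[R] M × Dual R M :=
  LinearMap.mk₂ R
    (fun u v => (cir u.1 v.1 - cir v.1 u.1, u.2 ∘ₗ cir v.1 - v.2 ∘ₗ cir u.1))
    (fun u v w => by ext <;> simp only [Prod.fst_add, Prod.snd_add, map_add, LinearMap.add_apply,
        LinearMap.sub_apply, LinearMap.coe_comp, Function.comp_apply] <;> abel)
    (fun c u v => by ext <;> simp [smul_sub])
    (fun u v w => by ext <;> simp only [Prod.fst_add, Prod.snd_add, map_add, LinearMap.add_apply,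
        LinearMap.sub_apply, LinearMap.coe_comp, Function.comp_apply] <;> abel)
    (fun c u v => by ext <;> simp [smul_sub])

def phaseForm : LinearMap.BilinForm R (M × Dual R M) :=
  LinearMap.mk₂ R (fun u v => u.2 v.1 - v.2 u.1)
    (fun u v w => by simp only [Prod.fst_add, Prod.snd_add, map_add, LinearMap.add_apply]; ring)
    (fun c u v => by
      simp only [Prod.smul_fst, Prod.smul_snd, map_smul, LinearMap.smul_apply, smul_eq_mul]; ring)
    (fun u v w => by simp only [Prod.fst_add, Prod.snd_add, map_add, LinearMap.add_apply]; ring)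
    (fun c u v => by
      simp only [Prod.smul_fst, Prod.smul_snd, map_smul, LinearMap.smul_apply, smul_eq_mul]; ring)

@[simp] lemma phaseMul_fst (mul : M →ₗ[R] M →ₗ[R] M) (u v : M × Dual R M) :
    (phaseMul mul u v).1 = mul u.1 v.1 + mul v.1 u.1 := rfl

@[simp] lemma phaseMul_snd_apply (mul : M →ₗ[R] M →ₗ[R] M) (u v : M × Dual R M) (z : M) :
    (phaseMul mul u v).2 z = v.2 (mul u.1 z) + u.2 (mul v.1 z) := rfl

@[simp] lemma phaseBracket_fst (cir : M →ₗ[R] M →ₗ[R] M) (u v : M × Dual R M) :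
    (phaseBracket cir u v).1 = cir u.1 v.1 - cir v.1 u.1 := rfl

@[simp] lemma phaseBracket_snd_apply (cir : M →ₗ[R] M →ₗ[R] M) (u v : M × Dual R M)
    (z : M) :
    (phaseBracket cir u v).2 z = u.2 (cir v.1 z) - v.2 (cir u.1 z) := rfl

@[simp] lemma phaseForm_apply (u v : M × Dual R M) :
    phaseForm u v = u.2 v.1 - v.2 u.1 := rfl

lemma phaseMul_comm (mul : M →ₗ[R] M →ₗ[R] M) (u v : M × Dual R M) :
    phaseMul mul u v = phaseMul mul v u := by
  ext <;> simp only [phaseMul_fst, phaseMul_snd_apply, add_comm]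

lemma phaseMul_assoc (mul : M →ₗ[R] M →ₗ[R] M)
    (hZin : ∀ x y z : M, mul x (mul y z) = mul (mul x y + mul y x) z)
    (u v w : M × Dual R M) :
    phaseMul mul (phaseMul mul u v) w = phaseMul mul u (phaseMul mul v w) := by
  have hZ (x y z : M) : mul x (mul y z) = mul (mul x y) z + mul (mul y x) z := by
    rw [hZin, map_add, LinearMap.add_apply]
  -- `hZ`, read left to right, turns every right-nested product into left-nested ones.
  ext z <;> simp only [phaseMul_fst, phaseMul_snd_apply, hZ, map_add, LinearMap.add_apply] <;> abel

lemma phaseBracket_self (cir : M →ₗ[R] M →ₗ[R] M) (u : M × Dual R M) :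
    phaseBracket cir u u = 0 := by
  ext <;> simp

lemma phaseBracket_jacobi (cir : M →ₗ[R] M →ₗ[R] M)
    (hPre : ∀ x y z : M,
      cir (cir x y) z - cir x (cir y z) = cir (cir y x) z - cir y (cir x z))
    (u v w : M × Dual R M) :
    phaseBracket cir u (phaseBracket cir v w) + phaseBracket cir v (phaseBracket cir w u)
      + phaseBracket cir w (phaseBracket cir u v) = 0 := by
  ext z
  · simp only [Prod.fst_add, phaseBracket_fst, map_sub, LinearMap.sub_apply, Prod.fst_zero]
    linear_combination (norm := module)
      -hPre v.1 w.1 u.1 - hPre w.1 u.1 v.1 - hPre u.1 v.1 w.1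
  · simp only [Prod.snd_add, LinearMap.add_apply, phaseBracket_fst, phaseBracket_snd_apply,
      map_sub, LinearMap.sub_apply, Prod.snd_zero, LinearMap.zero_apply]
    have dPre (f : Dual R M) (x y z : M) :
        f (cir (cir x y) z) - f (cir x (cir y z)) = f (cir (cir y x) z) - f (cir y (cir x z)) := by
      simp only [← map_sub, hPre]
    linear_combination dPre u.2 v.1 w.1 z + dPre v.2 w.1 u.1 z + dPre w.2 u.1 v.1 z

lemma phaseBracket_phaseMul (mul cir : M →ₗ[R] M →ₗ[R] M)
    (hC1 : ∀ x y z : M, mul (cir x y - cir y x) z = cir x (mul y z) - mul y (cir x z))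
    (hC2 : ∀ x y z : M, cir (mul x y + mul y x) z = mul x (cir y z) + mul y (cir x z))
    (u v w : M × Dual R M) :
    phaseBracket cir u (phaseMul mul v w)
      = phaseMul mul (phaseBracket cir u v) w + phaseMul mul v (phaseBracket cir u w) := by
  have hC1' (x y z : M) :
      mul (cir x y) z - mul (cir y x) z = cir x (mul y z) - mul y (cir x z) := by
    rw [← LinearMap.sub_apply, ← map_sub, hC1]
  have hC2' (x y z : M) :
      cir (mul x y) z + cir (mul y x) z = mul x (cir y z) + mul y (cir x z) := by
    rw [← LinearMap.add_apply, ← map_add, hC2]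
  have dC1 (f : Dual R M) (x y z : M) : f (mul (cir x y) z) - f (mul (cir y x) z)
      = f (cir x (mul y z)) - f (mul y (cir x z)) := by
    rw [← map_sub, ← map_sub, hC1']
  have dC2 (f : Dual R M) (x y z : M) : f (cir (mul x y) z) + f (cir (mul y x) z)
      = f (mul x (cir y z)) + f (mul y (cir x z)) := by
    rw [← map_add, ← map_add, hC2']
  ext z
  · simp only [phaseBracket_fst, phaseMul_fst, Prod.fst_add, map_add, map_sub,
      LinearMap.add_apply, LinearMap.sub_apply]
    linear_combination (norm := module) -hC1' u.1 v.1 w.1 - hC1' u.1 w.1 v.1 - hC2' v.1 w.1 u.1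
  · simp only [phaseBracket_fst, phaseBracket_snd_apply, phaseMul_fst, phaseMul_snd_apply,
      Prod.snd_add, LinearMap.add_apply, map_add, map_sub, LinearMap.sub_apply]
    linear_combination -dC1 w.2 u.1 v.1 z - dC1 v.2 u.1 w.1 z + dC1 u.2 v.1 w.1 z
      + dC1 u.2 w.1 v.1 z + dC2 u.2 v.1 w.1 z

lemma phaseForm_isAlt : (phaseForm : LinearMap.BilinForm R (M × Dual R M)).IsAlt :=
  fun _ => sub_self _

lemma phaseForm_separatingLeft [Projective R M] :
    (phaseForm : LinearMap.BilinForm R (M × Dual R M)).SeparatingLeft := by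
  intro u hu
  ext y
  · refine (forall_dual_apply_eq_zero_iff R u.1).mp fun φ => ?_
    simpa using (hu (0, φ)).symm
  · simpa using hu (y, 0)

lemma phaseForm_phaseBracket_cyclic (cir : M →ₗ[R] M →ₗ[R] M) (u v w : M × Dual R M) :
    phaseForm (phaseBracket cir u v) w + phaseForm (phaseBracket cir v w) u
      + phaseForm (phaseBracket cir w u) v = 0 := by
  simp only [phaseForm_apply, phaseBracket_snd_apply, phaseBracket_fst, map_sub]
  ring

lemma phaseForm_phaseMul_cyclic (mul : M →ₗ[R] M →ₗ[R] M) (u v w : M × Dual R M) :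
    phaseForm (phaseMul mul u v) w + phaseForm (phaseMul mul v w) u
      + phaseForm (phaseMul mul w u) v = 0 := by
  simp only [phaseForm_apply, phaseMul_snd_apply, phaseMul_fst, map_add]
  ring

lemma eq_phaseMul (mul : M →ₗ[R] M →ₗ[R] M)
    {bm : M × Dual R M → M × Dual R M → M × Dual R M}
    (hbm : ∀ (x y : M) (ξ η : Dual R M),
      (bm (x, ξ) (y, η)).1 = mul x y + mul y x ∧
      ∀ z : M, (bm (x, ξ) (y, η)).2 z = η (mul x z) + ξ (mul y z)) :
    bm = fun u v => phaseMul mul u v :=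
  funext₂ fun u v => Prod.ext (hbm u.1 v.1 u.2 v.2).1 (LinearMap.ext (hbm u.1 v.1 u.2 v.2).2)

lemma eq_phaseBracket (cir : M →ₗ[R] M →ₗ[R] M)
    {bb : M × Dual R M → M × Dual R M → M × Dual R M}
    (hbb : ∀ (x y : M) (ξ η : Dual R M),
      (bb (x, ξ) (y, η)).1 = cir x y - cir y x ∧
      ∀ z : M, (bb (x, ξ) (y, η)).2 z = - η (cir x z) + ξ (cir y z)) :
    bb = fun u v => phaseBracket cir u v :=
  funext₂ fun u v => Prod.ext (hbb u.1 v.1 u.2 v.2).1 <| LinearMap.ext fun z => by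
    rw [(hbb u.1 v.1 u.2 v.2).2, neg_add_eq_sub, phaseBracket_snd_apply]

end PrePoisson

open PrePoisson in
theorem phase_space_of_prePoisson_general
    {K : Type*} [Field K] {P : Type*} [AddCommGroup P] [Module K P]
    (mul cir : P →ₗ[K] P →ₗ[K] P)
    (hZin : ∀ x y z : P, mul x (mul y z) = mul (mul x y + mul y x) z)
    (hPre : ∀ x y z : P,
      cir (cir x y) z - cir x (cir y z) = cir (cir y x) z - cir y (cir x z))
    (hC1 : ∀ x y z : P,
      mul (cir x y - cir y x) z = cir x (mul y z) - mul y (cir x z))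
    (hC2 : ∀ x y z : P,
      cir (mul x y + mul y x) z = mul x (cir y z) + mul y (cir x z)) :
    ∀ bm bb : (P × Module.Dual K P) → (P × Module.Dual K P) → (P × Module.Dual K P),
      (∀ (x y : P) (ξ η : Module.Dual K P),
        (bm (x, ξ) (y, η)).1 = mul x y + mul y x ∧
        ∀ z : P, (bm (x, ξ) (y, η)).2 z = η (mul x z) + ξ (mul y z)) →
      (∀ (x y : P) (ξ η : Module.Dual K P),
        (bb (x, ξ) (y, η)).1 = cir x y - cir y x ∧
        ∀ z : P, (bb (x, ξ) (y, η)).2 z = - η (cir x z) + ξ (cir y z)) →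
      -- (1) (P ⊕ P*, •, ⟦·,·⟧) is a Poisson algebra
      ((∀ u v w : P × Module.Dual K P, bm (u + v) w = bm u w + bm v w) ∧
       (∀ (c : K) (u v : P × Module.Dual K P), bm (c • u) v = c • bm u v) ∧
       (∀ u v w : P × Module.Dual K P, bm u (v + w) = bm u v + bm u w) ∧
       (∀ (c : K) (u v : P × Module.Dual K P), bm u (c • v) = c • bm u v) ∧
       (∀ u v w : P × Module.Dual K P, bb (u + v) w = bb u w + bb v w) ∧
       (∀ (c : K) (u v : P × Module.Dual K P), bb (c • u) v = c • bb u v) ∧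
       (∀ u v w : P × Module.Dual K P, bb u (v + w) = bb u v + bb u w) ∧
       (∀ (c : K) (u v : P × Module.Dual K P), bb u (c • v) = c • bb u v) ∧
       (∀ u v : P × Module.Dual K P, bm u v = bm v u) ∧
       (∀ u v w : P × Module.Dual K P, bm (bm u v) w = bm u (bm v w)) ∧
       (∀ u : P × Module.Dual K P, bb u u = 0) ∧
       (∀ u v w : P × Module.Dual K P,
         bb u (bb v w) + bb v (bb w u) + bb w (bb u v) = 0) ∧
       (∀ u v w : P × Module.Dual K P,
         bb u (bm v w) = bm (bb u v) w + bm v (bb u w))) ∧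
      -- (2) ω(x+ξ, y+η) = ξ(y) − η(x) is a symplectic structure on it
      (∀ Ω : (P × Module.Dual K P) → (P × Module.Dual K P) → K,
        (∀ u v : P × Module.Dual K P, Ω u v = u.2 v.1 - v.2 u.1) →
        (∀ u : P × Module.Dual K P, Ω u u = 0) ∧
        (∀ u : P × Module.Dual K P, (∀ v, Ω u v = 0) → u = 0) ∧
        (∀ u v w : P × Module.Dual K P,
          Ω (bb u v) w + Ω (bb v w) u + Ω (bb w u) v = 0) ∧
        (∀ u v w : P × Module.Dual K P,
          Ω (bm u v) w + Ω (bm v w) u + Ω (bm w u) v = 0)) ∧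
      -- (3) P ⊕ 0 and 0 ⊕ P* are Poisson subalgebras
      (∀ x y : P,
        (bm (x, (0 : Module.Dual K P)) (y, (0 : Module.Dual K P))).2 = 0 ∧
        (bb (x, (0 : Module.Dual K P)) (y, (0 : Module.Dual K P))).2 = 0) ∧
      (∀ ξ η : Module.Dual K P,
        (bm ((0 : P), ξ) ((0 : P), η)).1 = 0 ∧
        (bb ((0 : P), ξ) ((0 : P), η)).1 = 0) := by
  intro bm bb hbm hbb
  obtain rfl := eq_phaseMul mul hbm
  obtain rfl := eq_phaseBracket cir hbb
  refine ⟨⟨LinearMap.map_add₂ _, LinearMap.map_smul₂ _, fun u => map_add _, fun c u => map_smul _ c,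
    LinearMap.map_add₂ _, LinearMap.map_smul₂ _, fun u => map_add _, fun c u => map_smul _ c,
    phaseMul_comm mul, phaseMul_assoc mul hZin, phaseBracket_self cir,
    phaseBracket_jacobi cir hPre, phaseBracket_phaseMul mul cir hC1 hC2⟩,
    fun Ω hΩ => ?_, fun _ _ => ⟨by ext; simp, by ext; simp⟩, fun _ _ => ⟨by simp, by simp⟩⟩
  obtain rfl : Ω = fun u v => phaseForm u v := funext₂ hΩ
  exact ⟨phaseForm_isAlt, phaseForm_separatingLeft, phaseForm_phaseBracket_cyclic cir,
    phaseForm_phaseMul_cyclic mul⟩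

/-- The semidirect product `P ⊕ P*` built from a finite-dimensional
pre-Poisson algebra is a phase space of the sub-adjacent Poisson algebra. -/
theorem phase_space_of_prePoisson
    {K : Type*} [Field K] {P : Type*} [AddCommGroup P] [Module K P]
    [FiniteDimensional K P]
    (mul cir : P →ₗ[K] P →ₗ[K] P)
    (hZin : ∀ x y z : P, mul x (mul y z) = mul (mul x y + mul y x) z)
    (hPre : ∀ x y z : P,
      cir (cir x y) z - cir x (cir y z) = cir (cir y x) z - cir y (cir x z))
    (hC1 : ∀ x y z : P,
      mul (cir x y - cir y x) z = cir x (mul y z) - mul y (cir x z))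
    (hC2 : ∀ x y z : P,
      cir (mul x y + mul y x) z = mul x (cir y z) + mul y (cir x z)) :
    ∀ bm bb : (P × Module.Dual K P) → (P × Module.Dual K P) → (P × Module.Dual K P),
      (∀ (x y : P) (ξ η : Module.Dual K P),
        (bm (x, ξ) (y, η)).1 = mul x y + mul y x ∧
        ∀ z : P, (bm (x, ξ) (y, η)).2 z = η (mul x z) + ξ (mul y z)) →
      (∀ (x y : P) (ξ η : Module.Dual K P),
        (bb (x, ξ) (y, η)).1 = cir x y - cir y x ∧
        ∀ z : P, (bb (x, ξ) (y, η)).2 z = - η (cir x z) + ξ (cir y z)) →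
      -- (1) (P ⊕ P*, •, ⟦·,·⟧) is a Poisson algebra
      ((∀ u v w : P × Module.Dual K P, bm (u + v) w = bm u w + bm v w) ∧
       (∀ (c : K) (u v : P × Module.Dual K P), bm (c • u) v = c • bm u v) ∧
       (∀ u v w : P × Module.Dual K P, bm u (v + w) = bm u v + bm u w) ∧
       (∀ (c : K) (u v : P × Module.Dual K P), bm u (c • v) = c • bm u v) ∧
       (∀ u v w : P × Module.Dual K P, bb (u + v) w = bb u w + bb v w) ∧
       (∀ (c : K) (u v : P × Module.Dual K P), bb (c • u) v = c • bb u v) ∧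
       (∀ u v w : P × Module.Dual K P, bb u (v + w) = bb u v + bb u w) ∧
       (∀ (c : K) (u v : P × Module.Dual K P), bb u (c • v) = c • bb u v) ∧
       (∀ u v : P × Module.Dual K P, bm u v = bm v u) ∧
       (∀ u v w : P × Module.Dual K P, bm (bm u v) w = bm u (bm v w)) ∧
       (∀ u : P × Module.Dual K P, bb u u = 0) ∧
       (∀ u v w : P × Module.Dual K P,
         bb u (bb v w) + bb v (bb w u) + bb w (bb u v) = 0) ∧
       (∀ u v w : P × Module.Dual K P,
         bb u (bm v w) = bm (bb u v) w + bm v (bb u w))) ∧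
      -- (2) ω(x+ξ, y+η) = ξ(y) − η(x) is a symplectic structure on it
      (∀ Ω : (P × Module.Dual K P) → (P × Module.Dual K P) → K,
        (∀ u v : P × Module.Dual K P, Ω u v = u.2 v.1 - v.2 u.1) →
        (∀ u : P × Module.Dual K P, Ω u u = 0) ∧
        (∀ u : P × Module.Dual K P, (∀ v, Ω u v = 0) → u = 0) ∧
        (∀ u v w : P × Module.Dual K P,
          Ω (bb u v) w + Ω (bb v w) u + Ω (bb w u) v = 0) ∧
        (∀ u v w : P × Module.Dual K P,
          Ω (bm u v) w + Ω (bm v w) u + Ω (bm w u) v = 0)) ∧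
      -- (3) P ⊕ 0 and 0 ⊕ P* are Poisson subalgebras
      (∀ x y : P,
        (bm (x, (0 : Module.Dual K P)) (y, (0 : Module.Dual K P))).2 = 0 ∧
        (bb (x, (0 : Module.Dual K P)) (y, (0 : Module.Dual K P))).2 = 0) ∧
      (∀ ξ η : Module.Dual K P,
        (bm ((0 : P), ξ) ((0 : P), η)).1 = 0 ∧
        (bb ((0 : P), ξ) ((0 : P), η)).1 = 0) :=
  phase_space_of_prePoisson_general mul cir hZin hPre hC1 hC2
end

section
/- Let (P,·_P,{·,·}_P) be a finite-dimensional Poisson algebra over a field K, and suppose (P⊕P*, •, ⟦·,·⟧) is a Poisson algebra such that: the bilinear form ω(x+ξ, y+η) := ξ(y) − η(x) is a symplectic structure on it; P⊕0 is a Poisson subalgebra whose induced operations coincide with ·_P and {·,·}_P; and 0⊕P* is a Poisson subalgebra. Let ∗ and ∘ be bilinear operations on P⊕P* satisfying ω(u∗v, w) = ω(v, u•w) and ω(u∘v, w) = −ω(v, ⟦u,w⟧) for all u,v,w ∈ P⊕P*. Then: for all x,y ∈ P, x∗y ∈ P and x∘y ∈ P; for all ξ,η ∈ P*, ξ∗η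 ∈ P* and ξ∘η ∈ P*; and x∗y + y∗x = x·_P y and x∘y − y∘x = {x,y}_P for all x,y ∈ P. In particular, P inherits a pre-Poisson algebra structure whose sub-adjacent Poisson algebra is (P,·_P,{·,·}_P). -/
/-!
Since `ω` is nondegenerate, an identity between elements of `P ⊕ P*` may be checked after
pairing with an arbitrary test vector. The adjunction relations move `∗` and `∘` across `ω`,
turning the Zinbiel, pre-Lie and compatibility identities into the associativity,
commutativity, Jacobi and Leibniz identities of `(•, ⟦·,·⟧)`, while the cyclicity of `ω` gives
`u ∗ v + v ∗ u = u • v` and `u ∘ v - v ∘ u = ⟦u, v⟧`. So `(P ⊕ P*, ∗, ∘)` is pre-Poisson.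

Both `P ⊕ 0` and `0 ⊕ P*` are Lagrangian for `ω`, and a Lagrangian subspace closed under an
operation is closed under its `ω`-adjoint. Hence `∗` and `∘` restrict to `P` and to `P*`, and on
`P` their sub-adjacent operations are those of `P ⊕ 0`, i.e. of `P`.
-/

section

variable {K : Type*} [Field K] {P : Type*} [AddCommGroup P] [Module K P]

/-- The canonical bilinear form `ω(x+ξ, y+η) = ξ(y) − η(x)` on `P ⊕ P*`. -/
def omegaStd (u v : P × Module.Dual K P) : K := u.2 v.1 - v.2 u.1

structure IsPrePoisson {A : Type*} [AddCommGroup A] (s c : A → A → A) : Prop where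
  zinbiel : ∀ x y z, s x (s y z) = s (s x y + s y x) z
  preLie : ∀ x y z, c (c x y) z - c x (c y z) = c (c y x) z - c y (c x z)
  star_circ_sub : ∀ x y z, s (c x y - c y x) z = c x (s y z) - s y (c x z)
  circ_star_add : ∀ x y z, c (s x y + s y x) z = s x (c y z) + s y (c x z)

theorem IsPrePoisson.of_injective {A B : Type*} [AddCommGroup A] [AddCommGroup B]
    {s c : B → B → B} (h : IsPrePoisson s c) {f : A →+ B} (hf : Function.Injective f)
    {s' c' : A → A → A} (hs : ∀ x y, f (s' x y) = s (f x) (f y))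
    (hc : ∀ x y, f (c' x y) = c (f x) (f y)) : IsPrePoisson s' c' where
  zinbiel x y z := hf <| by
    simp only [map_add, hs]; exact h.zinbiel (f x) (f y) (f z)
  preLie x y z := hf <| by
    simp only [map_sub, hc]; exact h.preLie (f x) (f y) (f z)
  star_circ_sub x y z := hf <| by
    simp only [map_sub, hs, hc]; exact h.star_circ_sub (f x) (f y) (f z)
  circ_star_add x y z := hf <| by
    simp only [map_add, hs, hc]; exact h.circ_star_add (f x) (f y) (f z)

section PoissonIdentities

variable {R V : Type*} [CommRing R] [AddCommGroup V] [Module R V] {m b : V →ₗ[R] V →ₗ[R] V}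

theorem bracket_swap_eq_neg (hb : ∀ u, b u u = 0) (u v : V) : b v u = -b u v := by
  have h := hb (u + v)
  simp only [map_add, LinearMap.add_apply, hb, zero_add, add_zero] at h
  exact eq_neg_of_add_eq_zero_left h

theorem bracket_bracket_eq_sub (hb : ∀ u, b u u = 0)
    (hjac : ∀ u v w, b u (b v w) + b v (b w u) + b w (b u v) = 0) (u v w : V) :
    b (b u v) w = b u (b v w) - b v (b u w) := by
  have h := hjac u v w
  rw [bracket_swap_eq_neg hb u w, map_neg, bracket_swap_eq_neg hb (b u v) w] at h
  rw [← sub_eq_zero, ← neg_eq_zero, ← h]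
  abel

theorem bracket_mul_eq_add (hb : ∀ u, b u u = 0) (hm : ∀ u v, m u v = m v u)
    (hleib : ∀ u v w, b u (m v w) = m (b u v) w + m v (b u w)) (u v w : V) :
    b (m u v) w = b v (m u w) + b u (m v w) := by
  rw [bracket_swap_eq_neg hb w (m u v), hleib w u v, hleib v u w, hleib u v w,
    bracket_swap_eq_neg hb u w, bracket_swap_eq_neg hb v w, bracket_swap_eq_neg hb u v]
  simp only [map_neg, LinearMap.neg_apply]
  rw [hm (b u w) v]
  abel

end PoissonIdentities

section Adjoint

open LinearMap (BilinForm IsAdjointPair SeparatingLeft)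

variable {R V : Type*} [CommRing R] [AddCommGroup V] [Module R V] {ω : BilinForm R V}
  {m b s c : V →ₗ[R] V →ₗ[R] V}

theorem LinearMap.SeparatingLeft.eq_of_forall_apply_eq (hω : SeparatingLeft ω) {x y : V}
    (h : ∀ w, ω x w = ω y w) : x = y :=
  LinearMap.ker_eq_bot.mp (LinearMap.separatingLeft_iff_ker_eq_bot.mp hω) (LinearMap.ext h)

theorem star_add_star_swap_eq_mul (hω : ω.IsAlt) (hωl : SeparatingLeft ω)
    (hm : ∀ u v, m u v = m v u)
    (hcyc : ∀ u v w, ω (m u v) w + ω (m v w) u + ω (m w u) v = 0)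
    (hs : ∀ u, IsAdjointPair ω ω (s u) (m u)) (u v : V) : s u v + s v u = m u v := by
  refine hωl.eq_of_forall_apply_eq fun w => ?_
  have h := hcyc u v w
  rw [hm w u] at h
  rw [LinearMap.map_add₂, hs, hs]
  linear_combination -h - hω.neg_eq (m u w) v - hω.neg_eq (m v w) u

theorem circ_sub_circ_swap_eq_bracket (hω : ω.IsAlt) (hωl : SeparatingLeft ω)
    (hb : ∀ u, b u u = 0)
    (hcyc : ∀ u v w, ω (b u v) w + ω (b v w) u + ω (b w u) v = 0)
    (hc : ∀ u, IsAdjointPair ω ω (c u) (-b u)) (u v : V) : c u v - c v u = b u v := by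
  refine hωl.eq_of_forall_apply_eq fun w => ?_
  have h := hcyc u v w
  rw [bracket_swap_eq_neg hb u w, map_neg, LinearMap.neg_apply] at h
  rw [LinearMap.map_sub₂, hc, hc, Pi.neg_apply, Pi.neg_apply, map_neg, map_neg]
  linear_combination -h + hω.neg_eq (b u w) v - hω.neg_eq (b v w) u

theorem star_star_eq_star_mul (hωl : SeparatingLeft ω) (hm : ∀ u v, m u v = m v u)
    (hassoc : ∀ u v w, m (m u v) w = m u (m v w))
    (hs : ∀ u, IsAdjointPair ω ω (s u) (m u)) (u v w : V) : s u (s v w) = s (m u v) w := by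
  refine hωl.eq_of_forall_apply_eq fun t => ?_
  rw [hs, hs, hs, ← hassoc v u t, hm v u, hassoc]

theorem circ_bracket_eq_circ_circ_sub (hωl : SeparatingLeft ω) (hb : ∀ u, b u u = 0)
    (hjac : ∀ u v w, b u (b v w) + b v (b w u) + b w (b u v) = 0)
    (hc : ∀ u, IsAdjointPair ω ω (c u) (-b u)) (u v w : V) :
    c (b u v) w = c u (c v w) - c v (c u w) := by
  refine hωl.eq_of_forall_apply_eq fun t => ?_
  rw [LinearMap.map_sub₂, hc, hc, hc, hc, hc]
  simp only [Pi.neg_apply, map_neg, neg_neg, bracket_bracket_eq_sub hb hjac, map_sub]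
  ring

theorem star_bracket_eq_circ_star_sub (hωl : SeparatingLeft ω)
    (hleib : ∀ u v w, b u (m v w) = m (b u v) w + m v (b u w))
    (hs : ∀ u, IsAdjointPair ω ω (s u) (m u)) (hc : ∀ u, IsAdjointPair ω ω (c u) (-b u))
    (u v w : V) : s (b u v) w = c u (s v w) - s v (c u w) := by
  refine hωl.eq_of_forall_apply_eq fun t => ?_
  rw [LinearMap.map_sub₂, hs, hc, hs, hs, hc]
  simp only [Pi.neg_apply, map_neg, hleib, map_add]
  ring

theorem circ_mul_eq_star_circ_add (hωl : SeparatingLeft ω) (hb : ∀ u, b u u = 0)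
    (hm : ∀ u v, m u v = m v u)
    (hleib : ∀ u v w, b u (m v w) = m (b u v) w + m v (b u w))
    (hs : ∀ u, IsAdjointPair ω ω (s u) (m u)) (hc : ∀ u, IsAdjointPair ω ω (c u) (-b u))
    (u v w : V) : c (m u v) w = s u (c v w) + s v (c u w) := by
  refine hωl.eq_of_forall_apply_eq fun t => ?_
  rw [LinearMap.map_add₂, hc, hs, hc, hs, hc]
  simp only [Pi.neg_apply, map_neg, bracket_mul_eq_add hb hm hleib, map_add]
  ring

theorem isPrePoisson_of_isAdjointPair (hω : ω.IsAlt) (hωl : SeparatingLeft ω)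
    (hm : ∀ u v, m u v = m v u) (hassoc : ∀ u v w, m (m u v) w = m u (m v w))
    (hb : ∀ u, b u u = 0) (hjac : ∀ u v w, b u (b v w) + b v (b w u) + b w (b u v) = 0)
    (hleib : ∀ u v w, b u (m v w) = m (b u v) w + m v (b u w))
    (hcyc_b : ∀ u v w, ω (b u v) w + ω (b v w) u + ω (b w u) v = 0)
    (hcyc_m : ∀ u v w, ω (m u v) w + ω (m v w) u + ω (m w u) v = 0)
    (hs : ∀ u, IsAdjointPair ω ω (s u) (m u)) (hc : ∀ u, IsAdjointPair ω ω (c u) (-b u)) :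
    IsPrePoisson (s · ·) (c · ·) := by
  have hsm := star_add_star_swap_eq_mul hω hωl hm hcyc_m hs
  have hcb := circ_sub_circ_swap_eq_bracket hω hωl hb hcyc_b hc
  refine ⟨fun u v w => ?_, fun u v w => ?_, fun u v w => ?_, fun u v w => ?_⟩
  · rw [hsm, star_star_eq_star_mul hωl hm hassoc hs]
  · have h := circ_bracket_eq_circ_circ_sub hωl hb hjac hc u v w
    rw [← hcb, LinearMap.map_sub₂] at h
    exact sub_eq_sub_iff_sub_eq_sub.mp h
  · rw [hcb, star_bracket_eq_circ_star_sub hωl hleib hs hc]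
  · rw [hsm, circ_mul_eq_star_circ_add hωl hb hm hleib hs hc]

theorem mem_of_isAdjointPair_of_orthogonal_eq {L : Submodule R V} {m : V → V → V}
    (hω : ω.IsAlt) (hL : ω.orthogonal L = L) (hm : ∀ u ∈ L, ∀ v ∈ L, m u v ∈ L)
    (hs : ∀ u, IsAdjointPair ω ω (s u) (m u)) {u v : V} (hu : u ∈ L) (hv : v ∈ L) :
    s u v ∈ L := by
  rw [← hL, LinearMap.BilinForm.mem_orthogonal_iff]
  intro w hw
  have hmw : m u w ∈ ω.orthogonal L := by rw [hL]; exact hm u hu w hw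
  rw [← hω.neg_eq, hs, hmw v hv, neg_zero]

end Adjoint

section PhaseSpace

open LinearMap (BilinForm IsAdjointPair SeparatingLeft ker fst snd)

def omegaStdForm : BilinForm K (P × Module.Dual K P) :=
  LinearMap.mk₂ K omegaStd (fun _ _ _ => by simp [omegaStd]; ring)
    (fun _ _ _ => by simp [omegaStd]; ring) (fun _ _ _ => by simp [omegaStd]; ring)
    (fun _ _ _ => by simp [omegaStd]; ring)

@[simp]
theorem omegaStdForm_apply (u v : P × Module.Dual K P) : omegaStdForm u v = omegaStd u v :=
  rfl

theorem omegaStdForm_isAlt : (omegaStdForm : BilinForm K (P × Module.Dual K P)).IsAlt :=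
  fun _ => sub_self _

theorem omegaStdForm_separatingLeft :
    SeparatingLeft (omegaStdForm : BilinForm K (P × Module.Dual K P)) := by
  intro u hu
  refine Prod.ext ((Module.forall_dual_apply_eq_zero_iff K _).mp fun ζ => ?_)
    (LinearMap.ext fun x => ?_)
  · simpa [omegaStd] using hu (0, ζ)
  · simpa [omegaStd] using hu (x, 0)

theorem omegaStdForm_orthogonal_ker_snd :
    omegaStdForm.orthogonal (ker (snd K P (Module.Dual K P))) =
      ker (snd K P (Module.Dual K P)) := by
  ext u
  simp only [LinearMap.BilinForm.mem_orthogonal_iff, LinearMap.mem_ker, LinearMap.snd_apply,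
    omegaStdForm_apply, omegaStd]
  constructor
  · intro h
    ext x
    simpa using h (x, 0) rfl
  · rintro h ⟨x, ξ⟩ (rfl : ξ = 0)
    simp [h]

theorem omegaStdForm_orthogonal_ker_fst :
    omegaStdForm.orthogonal (ker (fst K P (Module.Dual K P))) =
      ker (fst K P (Module.Dual K P)) := by
  ext u
  simp only [LinearMap.BilinForm.mem_orthogonal_iff, LinearMap.mem_ker, LinearMap.fst_apply,
    omegaStdForm_apply, omegaStd]
  constructor
  · intro h
    rw [← Module.forall_dual_apply_eq_zero_iff K]
    intro ζ
    simpa using h (0, ζ) rfl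
  · rintro h ⟨x, ξ⟩ (rfl : x = 0)
    simp [h]

theorem snd_eq_zero_of_isAdjointPair
    {m : P × Module.Dual K P → P × Module.Dual K P → P × Module.Dual K P}
    {s : (P × Module.Dual K P) →ₗ[K] (P × Module.Dual K P) →ₗ[K] (P × Module.Dual K P)}
    (hm : ∀ x y : P, (m (x, 0) (y, 0)).2 = 0)
    (hs : ∀ u, IsAdjointPair omegaStdForm omegaStdForm (s u) (m u)) (x y : P) :
    (s (x, 0) (y, 0)).2 = 0 :=
  mem_of_isAdjointPair_of_orthogonal_eq (L := ker (snd K P _)) omegaStdForm_isAlt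
    omegaStdForm_orthogonal_ker_snd
    (by rintro ⟨x, ξ⟩ (rfl : ξ = 0) ⟨y, η⟩ (rfl : η = 0); exact hm x y) hs
    (LinearMap.mem_ker.mpr rfl) (LinearMap.mem_ker.mpr rfl)

theorem fst_eq_zero_of_isAdjointPair
    {m : P × Module.Dual K P → P × Module.Dual K P → P × Module.Dual K P}
    {s : (P × Module.Dual K P) →ₗ[K] (P × Module.Dual K P) →ₗ[K] (P × Module.Dual K P)}
    (hm : ∀ ξ η : Module.Dual K P, (m (0, ξ) (0, η)).1 = 0)
    (hs : ∀ u, IsAdjointPair omegaStdForm omegaStdForm (s u) (m u)) (ξ η : Module.Dual K P) :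
    (s (0, ξ) (0, η)).1 = 0 :=
  mem_of_isAdjointPair_of_orthogonal_eq (L := ker (fst K P _)) omegaStdForm_isAlt
    omegaStdForm_orthogonal_ker_fst
    (by rintro ⟨x, ξ⟩ (rfl : x = 0) ⟨y, η⟩ (rfl : y = 0); exact hm ξ η) hs
    (LinearMap.mem_ker.mpr rfl) (LinearMap.mem_ker.mpr rfl)

end PhaseSpace

theorem prePoisson_restriction_of_phase_space_general
    (pmul pbr : P →ₗ[K] P →ₗ[K] P)
    (bm bb bs bc : (P × Module.Dual K P) →ₗ[K] (P × Module.Dual K P) →ₗ[K]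
      (P × Module.Dual K P))
    -- `(P ⊕ P*, •, ⟦·,·⟧)` is a Poisson algebra
    (hbigcomm : ∀ u v : P × Module.Dual K P, bm u v = bm v u)
    (hbigassoc : ∀ u v w : P × Module.Dual K P, bm (bm u v) w = bm u (bm v w))
    (hbigalt : ∀ u : P × Module.Dual K P, bb u u = 0)
    (hbigjac : ∀ u v w : P × Module.Dual K P,
      bb u (bb v w) + bb v (bb w u) + bb w (bb u v) = 0)
    (hbigleib : ∀ u v w : P × Module.Dual K P,
      bb u (bm v w) = bm (bb u v) w + bm v (bb u w))
    -- `ω` is a symplectic structure on it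
    (hωcyc1 : ∀ u v w : P × Module.Dual K P,
      omegaStd (bb u v) w + omegaStd (bb v w) u + omegaStd (bb w u) v = 0)
    (hωcyc2 : ∀ u v w : P × Module.Dual K P,
      omegaStd (bm u v) w + omegaStd (bm v w) u + omegaStd (bm w u) v = 0)
    -- `P ⊕ 0` is a Poisson subalgebra whose operations coincide with those of `P`
    (hPsub : ∀ x y : P,
      bm (x, (0 : Module.Dual K P)) (y, 0) = (pmul x y, 0) ∧
      bb (x, (0 : Module.Dual K P)) (y, 0) = (pbr x y, 0))
    -- `0 ⊕ P*` is a Poisson subalgebra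
    (hQsub : ∀ ξ η : Module.Dual K P,
      (bm ((0 : P), ξ) (0, η)).1 = 0 ∧ (bb ((0 : P), ξ) (0, η)).1 = 0)
    -- `∗` and `∘` are the operations determined by `ω`
    (hadj1 : ∀ u v w : P × Module.Dual K P,
      omegaStd (bs u v) w = omegaStd v (bm u w))
    (hadj2 : ∀ u v w : P × Module.Dual K P,
      omegaStd (bc u v) w = - omegaStd v (bb u w)) :
    -- `P` is closed under `∗` and `∘`
    (∀ x y : P,
      (bs (x, (0 : Module.Dual K P)) (y, 0)).2 = 0 ∧
      (bc (x, (0 : Module.Dual K P)) (y, 0)).2 = 0) ∧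
    -- `P*` is closed under `∗` and `∘`
    (∀ ξ η : Module.Dual K P,
      (bs ((0 : P), ξ) (0, η)).1 = 0 ∧ (bc ((0 : P), ξ) (0, η)).1 = 0) ∧
    -- the sub-adjacent operations on `P` recover the original Poisson structure
    (∀ x y : P,
      bs (x, (0 : Module.Dual K P)) (y, 0) + bs (y, (0 : Module.Dual K P)) (x, 0)
        = (pmul x y, 0) ∧
      bc (x, (0 : Module.Dual K P)) (y, 0) - bc (y, (0 : Module.Dual K P)) (x, 0)
        = (pbr x y, 0)) ∧
    -- in particular, `P` inherits a pre-Poisson algebra structure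
    (∀ s c : P → P → P,
      (∀ x y : P, s x y = (bs (x, (0 : Module.Dual K P)) (y, 0)).1) →
      (∀ x y : P, c x y = (bc (x, (0 : Module.Dual K P)) (y, 0)).1) →
      (∀ x y z : P, s x (s y z) = s (s x y + s y x) z) ∧
      (∀ x y z : P, c (c x y) z - c x (c y z) = c (c y x) z - c y (c x z)) ∧
      (∀ x y z : P, s (c x y - c y x) z = c x (s y z) - s y (c x z)) ∧
      (∀ x y z : P, c (s x y + s y x) z = s x (c y z) + s y (c x z))) := by
  have hω := omegaStdForm_isAlt (K := K) (P := P)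
  have hωl := omegaStdForm_separatingLeft (K := K) (P := P)
  have hs : ∀ u, LinearMap.IsAdjointPair omegaStdForm omegaStdForm (bs u) (bm u) := hadj1
  have hc : ∀ u, LinearMap.IsAdjointPair omegaStdForm omegaStdForm (bc u) (-bb u) :=
    fun u v w => by rw [Pi.neg_apply, map_neg]; exact hadj2 u v w
  have hclosedP : ∀ x y : P,
      (bs (x, (0 : Module.Dual K P)) (y, 0)).2 = 0 ∧
      (bc (x, (0 : Module.Dual K P)) (y, 0)).2 = 0 :=
    fun x y => ⟨snd_eq_zero_of_isAdjointPair (by simp [hPsub]) hs x y,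
      snd_eq_zero_of_isAdjointPair (m := fun u => -bb u) (by simp [hPsub]) hc x y⟩
  have hclosedQ : ∀ ξ η : Module.Dual K P,
      (bs ((0 : P), ξ) (0, η)).1 = 0 ∧ (bc ((0 : P), ξ) (0, η)).1 = 0 :=
    fun ξ η => ⟨fst_eq_zero_of_isAdjointPair (fun ξ η => (hQsub ξ η).1) hs ξ η,
      fst_eq_zero_of_isAdjointPair (m := fun u => -bb u) (by simp [hQsub]) hc ξ η⟩
  have hsm := star_add_star_swap_eq_mul hω hωl hbigcomm hωcyc2 hs
  have hcb := circ_sub_circ_swap_eq_bracket hω hωl hbigalt hωcyc1 hc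
  refine ⟨hclosedP, hclosedQ,
    fun x y => ⟨by rw [hsm, (hPsub x y).1], by rw [hcb, (hPsub x y).2]⟩, ?_⟩
  intro s c hs_def hc_def
  have h := (isPrePoisson_of_isAdjointPair hω hωl hbigcomm hbigassoc hbigalt hbigjac hbigleib
    hωcyc1 hωcyc2 hs hc).of_injective (f := AddMonoidHom.inl P (Module.Dual K P))
    (Prod.mk_left_injective 0) (fun x y => Prod.ext (hs_def x y) (hclosedP x y).1.symm)
    (fun x y => Prod.ext (hc_def x y) (hclosedP x y).2.symm)
  exact ⟨h.zinbiel, h.preLie, h.star_circ_sub, h.circ_star_add⟩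

/-- In a phase space of a Poisson algebra, the pre-Poisson
operations obtained from the symplectic form restrict to `P` and `P*`, and on
`P` their sub-adjacent operations recover the original Poisson structure. -/
theorem prePoisson_restriction_of_phase_space
    [FiniteDimensional K P]
    (pmul pbr : P →ₗ[K] P →ₗ[K] P)
    (hcomm : ∀ x y : P, pmul x y = pmul y x)
    (hassoc : ∀ x y z : P, pmul (pmul x y) z = pmul x (pmul y z))
    (halt : ∀ x : P, pbr x x = 0)
    (hjac : ∀ x y z : P, pbr x (pbr y z) + pbr y (pbr z x) + pbr z (pbr x y) = 0)
    (hleib : ∀ x y z : P, pbr x (pmul y z) = pmul (pbr x y) z + pmul y (pbr x z))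
    (bm bb bs bc : (P × Module.Dual K P) →ₗ[K] (P × Module.Dual K P) →ₗ[K]
      (P × Module.Dual K P))
    -- `(P ⊕ P*, •, ⟦·,·⟧)` is a Poisson algebra
    (hbigcomm : ∀ u v : P × Module.Dual K P, bm u v = bm v u)
    (hbigassoc : ∀ u v w : P × Module.Dual K P, bm (bm u v) w = bm u (bm v w))
    (hbigalt : ∀ u : P × Module.Dual K P, bb u u = 0)
    (hbigjac : ∀ u v w : P × Module.Dual K P,
      bb u (bb v w) + bb v (bb w u) + bb w (bb u v) = 0)
    (hbigleib : ∀ u v w : P × Module.Dual K P,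
      bb u (bm v w) = bm (bb u v) w + bm v (bb u w))
    -- `ω` is a symplectic structure on it
    (hωalt : ∀ u : P × Module.Dual K P, omegaStd u u = 0)
    (hωnd : ∀ u : P × Module.Dual K P, (∀ v, omegaStd u v = 0) → u = 0)
    (hωcyc1 : ∀ u v w : P × Module.Dual K P,
      omegaStd (bb u v) w + omegaStd (bb v w) u + omegaStd (bb w u) v = 0)
    (hωcyc2 : ∀ u v w : P × Module.Dual K P,
      omegaStd (bm u v) w + omegaStd (bm v w) u + omegaStd (bm w u) v = 0)
    -- `P ⊕ 0` is a Poisson subalgebra whose operations coincide with those of `P`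
    (hPsub : ∀ x y : P,
      bm (x, (0 : Module.Dual K P)) (y, 0) = (pmul x y, 0) ∧
      bb (x, (0 : Module.Dual K P)) (y, 0) = (pbr x y, 0))
    -- `0 ⊕ P*` is a Poisson subalgebra
    (hQsub : ∀ ξ η : Module.Dual K P,
      (bm ((0 : P), ξ) (0, η)).1 = 0 ∧ (bb ((0 : P), ξ) (0, η)).1 = 0)
    -- `∗` and `∘` are the operations determined by `ω`
    (hadj1 : ∀ u v w : P × Module.Dual K P,
      omegaStd (bs u v) w = omegaStd v (bm u w))
    (hadj2 : ∀ u v w : P × Module.Dual K P,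
      omegaStd (bc u v) w = - omegaStd v (bb u w)) :
    -- `P` is closed under `∗` and `∘`
    (∀ x y : P,
      (bs (x, (0 : Module.Dual K P)) (y, 0)).2 = 0 ∧
      (bc (x, (0 : Module.Dual K P)) (y, 0)).2 = 0) ∧
    -- `P*` is closed under `∗` and `∘`
    (∀ ξ η : Module.Dual K P,
      (bs ((0 : P), ξ) (0, η)).1 = 0 ∧ (bc ((0 : P), ξ) (0, η)).1 = 0) ∧
    -- the sub-adjacent operations on `P` recover the original Poisson structure
    (∀ x y : P,
      bs (x, (0 : Module.Dual K P)) (y, 0) + bs (y, (0 : Module.Dual K P)) (x, 0)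
        = (pmul x y, 0) ∧
      bc (x, (0 : Module.Dual K P)) (y, 0) - bc (y, (0 : Module.Dual K P)) (x, 0)
        = (pbr x y, 0)) ∧
    -- in particular, `P` inherits a pre-Poisson algebra structure
    (∀ s c : P → P → P,
      (∀ x y : P, s x y = (bs (x, (0 : Module.Dual K P)) (y, 0)).1) →
      (∀ x y : P, c x y = (bc (x, (0 : Module.Dual K P)) (y, 0)).1) →
      (∀ x y z : P, s x (s y z) = s (s x y + s y x) z) ∧
      (∀ x y z : P, c (c x y) z - c x (c y z) = c (c y x) z - c y (c x z)) ∧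
      (∀ x y z : P, s (c x y - c y x) z = c x (s y z) - s y (c x z)) ∧
      (∀ x y z : P, c (s x y + s y x) z = s x (c y z) + s y (c x z))) :=
  prePoisson_restriction_of_phase_space_general pmul pbr bm bb bs bc hbigcomm hbigassoc hbigalt
    hbigjac hbigleib hωcyc1 hωcyc2 hPsub hQsub hadj1 hadj2

end
end

section
/- Let (P,∗,∘,ω) be a quadratic pre-Poisson algebra over a field K of characteristic different from 2, and let x·y := x∗y + y∗x and {x,y} := x∘y − y∘x be the sub-adjacent operations. Then for all x,y,z ∈ P: ω(x∗y, z) = ω(z∗y, x) and ω(x∘y, z) = −ω(z∘y, x); moreover ω is a symplectic structure on the sub-adjacent Poisson algebra, i.e., ω({x,y},z) + ω({y,z},x) + ω({z,x},y) = 0 and ω(x·y,z) + ω(y·z,x) + ω(z·x,y) = 0. -/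
/-! Since `ω` is alternating, each invariance condition exchanges the right factor of a product
with the second argument of `ω`, at the cost of (skew-)symmetrising the product:
`ω (x ∗ y) z = -ω (x · z) y` and `ω (x ∘ y) z = ω {x, z} y`. Expanding `ω (x · y) z` resp.
`ω {x, y} z` by these rules and using the (anti)symmetry of `·` resp. `{-, -}` gives the cyclic
identities. -/

namespace LinearMap

variable {R M : Type*} [CommRing R] [AddCommGroup M] [Module R M] (ω : M →ₗ[R] M →ₗ[R] R)

def IsZinbielInvariant (μ : M →ₗ[R] M →ₗ[R] M) : Prop :=
  ∀ x y z, ω (μ x y) z = ω y (μ x z + μ z x)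

def IsPreLieInvariant (κ : M →ₗ[R] M →ₗ[R] M) : Prop :=
  ∀ x y z, ω (κ x y) z = -ω y (κ x z - κ z x)

variable {ω}

namespace IsZinbielInvariant

variable {μ : M →ₗ[R] M →ₗ[R] M} (hμ : ω.IsZinbielInvariant μ)
include hμ

theorem apply_swap (x y z : M) : ω (μ x y) z = ω (μ z y) x := by
  rw [hμ, hμ, add_comm]

theorem apply_eq_neg_symm (hω : ω.IsAlt) (x y z : M) :
    ω (μ x y) z = -ω (μ x z + μ z x) y := by
  rw [hμ, hω.neg]

theorem cyclic_sum_symm_eq_zero (hω : ω.IsAlt) (x y z : M) :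
    ω (μ x y + μ y x) z + ω (μ y z + μ z y) x + ω (μ z x + μ x z) y = 0 := by
  simp only [map_add, add_apply, hμ.apply_eq_neg_symm hω x y z, hμ.apply_eq_neg_symm hω y x z]
  ring

end IsZinbielInvariant

namespace IsPreLieInvariant

variable {κ : M →ₗ[R] M →ₗ[R] M} (hκ : ω.IsPreLieInvariant κ)
include hκ

theorem apply_swap (x y z : M) : ω (κ x y) z = -ω (κ z y) x := by
  simp only [hκ x y z, hκ z y x, map_sub]
  ring

theorem apply_eq_commutator (hω : ω.IsAlt) (x y z : M) :
    ω (κ x y) z = ω (κ x z - κ z x) y := by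
  rw [hκ, hω.neg]

theorem cyclic_sum_commutator_eq_zero (hω : ω.IsAlt) (x y z : M) :
    ω (κ x y - κ y x) z + ω (κ y z - κ z y) x + ω (κ z x - κ x z) y = 0 := by
  simp only [map_sub, sub_apply, hκ.apply_eq_commutator hω x y z,
    hκ.apply_eq_commutator hω y x z]
  ring

end IsPreLieInvariant

end LinearMap

theorem quadratic_prePoisson_symplectic_general
    {K : Type*} [Field K] {P : Type*} [AddCommGroup P] [Module K P]
    (mul cir : P →ₗ[K] P →ₗ[K] P)
    (ω : P →ₗ[K] P →ₗ[K] K)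
    (hωalt : ∀ x : P, ω x x = 0)
    (hq1 : ∀ x y z : P, ω (mul x y) z = ω y (mul x z + mul z x))
    (hq2 : ∀ x y z : P, ω (cir x y) z = - ω y (cir x z - cir z x)) :
    (∀ x y z : P, ω (mul x y) z = ω (mul z y) x) ∧
    (∀ x y z : P, ω (cir x y) z = - ω (cir z y) x) ∧
    (∀ x y z : P,
      ω (cir x y - cir y x) z + ω (cir y z - cir z y) x
        + ω (cir z x - cir x z) y = 0) ∧
    (∀ x y z : P,
      ω (mul x y + mul y x) z + ω (mul y z + mul z y) x
        + ω (mul z x + mul x z) y = 0) := by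
  have hmul : ω.IsZinbielInvariant mul := hq1
  have hcir : ω.IsPreLieInvariant cir := hq2
  exact ⟨hmul.apply_swap, hcir.apply_swap, hcir.cyclic_sum_commutator_eq_zero hωalt,
    hmul.cyclic_sum_symm_eq_zero hωalt⟩

/-- In a quadratic pre-Poisson algebra (char ≠ 2), the form
satisfies the extra invariance identities and is a symplectic structure on the
sub-adjacent Poisson algebra. -/
theorem quadratic_prePoisson_symplectic
    {K : Type*} [Field K] {P : Type*} [AddCommGroup P] [Module K P]
    (hchar : (2 : K) ≠ 0)
    (mul cir : P →ₗ[K] P →ₗ[K] P)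
    (hZin : ∀ x y z : P, mul x (mul y z) = mul (mul x y + mul y x) z)
    (hPre : ∀ x y z : P,
      cir (cir x y) z - cir x (cir y z) = cir (cir y x) z - cir y (cir x z))
    (hC1 : ∀ x y z : P,
      mul (cir x y - cir y x) z = cir x (mul y z) - mul y (cir x z))
    (hC2 : ∀ x y z : P,
      cir (mul x y + mul y x) z = mul x (cir y z) + mul y (cir x z))
    (ω : P →ₗ[K] P →ₗ[K] K)
    (hωalt : ∀ x : P, ω x x = 0)
    (hωnd : ∀ x : P, (∀ y : P, ω x y = 0) → x = 0)
    (hq1 : ∀ x y z : P, ω (mul x y) z = ω y (mul x z + mul z x))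
    (hq2 : ∀ x y z : P, ω (cir x y) z = - ω y (cir x z - cir z x)) :
    (∀ x y z : P, ω (mul x y) z = ω (mul z y) x) ∧
    (∀ x y z : P, ω (cir x y) z = - ω (cir z y) x) ∧
    (∀ x y z : P,
      ω (cir x y - cir y x) z + ω (cir y z - cir z y) x
        + ω (cir z x - cir x z) y = 0) ∧
    (∀ x y z : P,
      ω (mul x y + mul y x) z + ω (mul y z + mul z y) x
        + ω (mul z x + mul x z) y = 0) :=
  quadratic_prePoisson_symplectic_general mul cir ω hωalt hq1 hq2
end

section
/- Let (P,∗,∘) be a finite-dimensional pre-Poisson algebra over a field K and r ∈ P⊗P such that r − τ(r) is (L,R)-invariant. Set I := r₊ − r₋ and define bilinear operations on P* by (ξ ∗₊ η)(y) := ξ(y∗(Iη)) and (ξ ∘₊ η)(y) := −ξ(y∘(Iη)) for all y ∈ P. Then (P*, ∗₊, ∘₊) is a pre-Poisson algebra. -/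
open TensorProduct

section

variable {K : Type*} [Field K] {P : Type*} [AddCommGroup P] [Module K P]

/-- The map `r₊ : P* → P` induced by `r ∈ P ⊗ P`: if `r = Σᵢ aᵢ ⊗ bᵢ` then
`r₊(ξ) = Σᵢ ξ(aᵢ) • bᵢ`, so that `η(r₊ ξ) = r(ξ, η)`. -/
noncomputable def rPlus (r : P ⊗[K] P) (ξ : Module.Dual K P) : P :=
  TensorProduct.lift ((LinearMap.lsmul K P).comp ξ) r

/-- The map `r₋ : P* → P` induced by `r ∈ P ⊗ P`: if `r = Σᵢ aᵢ ⊗ bᵢ` then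
`r₋(η) = Σᵢ η(bᵢ) • aᵢ`, so that `ξ(r₋ η) = r(ξ, η)`. -/
noncomputable def rMinus (r : P ⊗[K] P) (η : Module.Dual K P) : P :=
  TensorProduct.lift (((LinearMap.lsmul K P).comp η).flip) r

/-- `(L,R)`-invariance of an element `a ∈ P ⊗ P`. -/
def LRinv (mul cir : P →ₗ[K] P →ₗ[K] P) (a : P ⊗[K] P) : Prop :=
  (∀ x : P,
    (TensorProduct.map (mul x) (LinearMap.id : P →ₗ[K] P)
      - TensorProduct.map (LinearMap.id : P →ₗ[K] P) (mul x + mul.flip x)) a = 0) ∧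
  (∀ x : P,
    (TensorProduct.map (cir x) (LinearMap.id : P →ₗ[K] P)
      + TensorProduct.map (LinearMap.id : P →ₗ[K] P) (cir x - cir.flip x)) a = 0)

/-- The Zinbiel Yang–Baxter expression `Z(r)` for `r = Σᵢ aᵢ ⊗ bᵢ`. -/
noncomputable def Zsum (mul : P →ₗ[K] P →ₗ[K] P) {n : ℕ} (a b : Fin n → P) :
    P ⊗[K] (P ⊗[K] P) :=
  - ∑ i, ∑ j, mul (a i) (a j) ⊗ₜ[K] (b j ⊗ₜ[K] b i)
  - ∑ i, ∑ j, b j ⊗ₜ[K] (mul (a i) (a j) ⊗ₜ[K] b i)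
  + ∑ i, ∑ j, (mul (a i) (b j) + mul (b j) (a i)) ⊗ₜ[K] (a j ⊗ₜ[K] b i)
  + ∑ i, ∑ j, a i ⊗ₜ[K] ((mul (b i) (a j) + mul (a j) (b i)) ⊗ₜ[K] b j)
  - ∑ i, ∑ j, a i ⊗ₜ[K] (a j ⊗ₜ[K] (mul (b i) (b j) + mul (b j) (b i)))

/-- The S-equation expression `S(r)` for `r = Σᵢ aᵢ ⊗ bᵢ`. -/
noncomputable def Ssum (cir : P →ₗ[K] P →ₗ[K] P) {n : ℕ} (a b : Fin n → P) :
    P ⊗[K] (P ⊗[K] P) :=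
  ∑ i, ∑ j, cir (a i) (a j) ⊗ₜ[K] (b j ⊗ₜ[K] b i)
  - ∑ i, ∑ j, b j ⊗ₜ[K] (cir (a i) (a j) ⊗ₜ[K] b i)
  + ∑ i, ∑ j, b j ⊗ₜ[K] ((cir (a i) (a j) - cir (a j) (a i)) ⊗ₜ[K] b i)
  - ∑ i, ∑ j, (cir (a i) (b j) - cir (b j) (a i)) ⊗ₜ[K] (a j ⊗ₜ[K] b i)
  - ∑ i, ∑ j, a i ⊗ₜ[K] (a j ⊗ₜ[K] (cir (b i) (b j) - cir (b j) (b i)))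

/-- The multiplication `∗_r` induced by `r` on the dual space:
`(ξ ∗_r η)(y) = η(r₊ξ ∗ y + y ∗ r₊ξ) − ξ(y ∗ r₋η)`. -/
noncomputable def srOp (mul : P →ₗ[K] P →ₗ[K] P) (r : P ⊗[K] P)
    (ξ η : Module.Dual K P) : Module.Dual K P :=
  η ∘ₗ (mul (rPlus r ξ) + mul.flip (rPlus r ξ)) - ξ ∘ₗ mul.flip (rMinus r η)

/-- The multiplication `∘_r` induced by `r` on the dual space:
`(ξ ∘_r η)(y) = −η(r₊ξ ∘ y − y ∘ r₊ξ) + ξ(y ∘ r₋η)`. -/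
noncomputable def crOp (cir : P →ₗ[K] P →ₗ[K] P) (r : P ⊗[K] P)
    (ξ η : Module.Dual K P) : Module.Dual K P :=
  - (η ∘ₗ (cir (rPlus r ξ) - cir.flip (rPlus r ξ))) + ξ ∘ₗ cir.flip (rMinus r η)


/-- The multiplication `∗₊` on the dual space: `(ξ ∗₊ η)(y) = ξ(y ∗ (Iη))`
where `I = r₊ − r₋`. -/
noncomputable def sPlusOp (mul : P →ₗ[K] P →ₗ[K] P) (r : P ⊗[K] P)
    (ξ η : Module.Dual K P) : Module.Dual K P :=
  ξ ∘ₗ mul.flip (rPlus r η - rMinus r η)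

/-- The multiplication `∘₊` on the dual space: `(ξ ∘₊ η)(y) = −ξ(y ∘ (Iη))`
where `I = r₊ − r₋`. -/
noncomputable def cPlusOp (cir : P →ₗ[K] P →ₗ[K] P) (r : P ⊗[K] P)
    (ξ η : Module.Dual K P) : Module.Dual K P :=
  - (ξ ∘ₗ cir.flip (rPlus r η - rMinus r η))

/-! Write `I := r₊ - r₋` (`rSkew r`). The pairing `ψ (I φ)` is skew-symmetric, and invariance of
`r - τ(r)` computes `I (φ ∘ L∗(x))` and `I (φ ∘ L∘(x))`. Together they give a second formula for
each dual product, with the roles of `ξ` and `η` exchanged, and show that `-I` is a homomorphism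
for both products. Evaluated at `y ∈ P`, each pre-Poisson identity on `P*` then becomes `ξ` or `η`
applied to a single defining identity of `P` (for the Zinbiel identity, to its consequence
`y ∗ (b ∗ c) = b ∗ (y ∗ c)`). -/

@[simp]
lemma rPlus_tmul (x y : P) (φ : Module.Dual K P) : rPlus (x ⊗ₜ[K] y) φ = φ x • y := by
  simp [rPlus]

@[simp]
lemma rMinus_tmul (x y : P) (φ : Module.Dual K P) : rMinus (x ⊗ₜ[K] y) φ = φ y • x := by
  simp [rMinus]

lemma rPlus_sub (s t : P ⊗[K] P) (φ : Module.Dual K P) :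
    rPlus (s - t) φ = rPlus s φ - rPlus t φ :=
  map_sub _ s t

lemma rMinus_sub (s t : P ⊗[K] P) (φ : Module.Dual K P) :
    rMinus (s - t) φ = rMinus s φ - rMinus t φ :=
  map_sub _ s t

lemma rPlus_neg (s : P ⊗[K] P) (φ : Module.Dual K P) : rPlus (-s) φ = - rPlus s φ :=
  map_neg _ s

lemma apply_rPlus (s : P ⊗[K] P) (φ ψ : Module.Dual K P) :
    ψ (rPlus s φ) = φ (rMinus s ψ) := by
  induction s using TensorProduct.induction_on with
  | zero => simp [rPlus, rMinus]
  | tmul x y => simp [mul_comm]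
  | add s t hs ht => simp only [rPlus, rMinus, map_add] at hs ht ⊢; rw [hs, ht]

lemma rPlus_comm (s : P ⊗[K] P) (φ : Module.Dual K P) :
    rPlus (TensorProduct.comm K P P s) φ = rMinus s φ := by
  induction s using TensorProduct.induction_on with
  | zero => simp [rPlus, rMinus]
  | tmul x y => simp
  | add s t hs ht => simp only [rPlus, rMinus, map_add] at hs ht ⊢; rw [hs, ht]

lemma rMinus_comm (s : P ⊗[K] P) (φ : Module.Dual K P) :
    rMinus (TensorProduct.comm K P P s) φ = rPlus s φ := by
  induction s using TensorProduct.induction_on with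
  | zero => simp [rPlus, rMinus]
  | tmul x y => simp
  | add s t hs ht => simp only [rPlus, rMinus, map_add] at hs ht ⊢; rw [hs, ht]

lemma rPlus_map (f g : P →ₗ[K] P) (s : P ⊗[K] P) (φ : Module.Dual K P) :
    rPlus (TensorProduct.map f g s) φ = g (rPlus s (φ ∘ₗ f)) := by
  induction s using TensorProduct.induction_on with
  | zero => simp [rPlus]
  | tmul x y => simp
  | add s t hs ht => simp only [rPlus, map_add] at hs ht ⊢; rw [hs, ht]

noncomputable def rSkew (r : P ⊗[K] P) (φ : Module.Dual K P) : P :=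
  rPlus r φ - rMinus r φ

lemma rPlus_sub_comm (r : P ⊗[K] P) (φ : Module.Dual K P) :
    rPlus (r - TensorProduct.comm K P P r) φ = rSkew r φ := by
  rw [rPlus_sub, rPlus_comm, rSkew]

lemma rMinus_sub_comm (r : P ⊗[K] P) (φ : Module.Dual K P) :
    rMinus (r - TensorProduct.comm K P P r) φ = - rSkew r φ := by
  rw [rMinus_sub, rMinus_comm, rSkew, neg_sub]

lemma apply_rSkew (r : P ⊗[K] P) (φ ψ : Module.Dual K P) :
    ψ (rSkew r φ) = - φ (rSkew r ψ) := by
  rw [← rPlus_sub_comm, apply_rPlus, rMinus_sub_comm, map_neg]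

variable {mul cir : P →ₗ[K] P →ₗ[K] P} {r : P ⊗[K] P}

lemma sPlusOp_apply (ξ η : Module.Dual K P) (y : P) :
    sPlusOp mul r ξ η y = ξ (mul y (rSkew r η)) :=
  rfl

lemma cPlusOp_apply (ξ η : Module.Dual K P) (y : P) :
    cPlusOp cir r ξ η y = - ξ (cir y (rSkew r η)) :=
  rfl

namespace LRinv

lemma rSkew_comp_mul (hinv : LRinv mul cir (r - TensorProduct.comm K P P r))
    (x : P) (φ : Module.Dual K P) :
    rSkew r (φ ∘ₗ mul x) = mul x (rSkew r φ) + mul (rSkew r φ) x := by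
  have h := congrArg (rPlus · φ) (sub_eq_zero.mp (hinv.1 x))
  simpa only [rPlus_map, rPlus_sub_comm, LinearMap.id_apply, LinearMap.comp_id,
    LinearMap.add_apply, LinearMap.flip_apply] using h

lemma rSkew_comp_cir (hinv : LRinv mul cir (r - TensorProduct.comm K P P r))
    (x : P) (φ : Module.Dual K P) :
    rSkew r (φ ∘ₗ cir x) = cir (rSkew r φ) x - cir x (rSkew r φ) := by
  have h := hinv.2 x
  rw [LinearMap.add_apply, add_eq_zero_iff_eq_neg] at h
  have h' := congrArg (rPlus · φ) h
  simp only [rPlus_neg, rPlus_map, rPlus_sub_comm, LinearMap.id_apply, LinearMap.comp_id,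
    LinearMap.sub_apply, LinearMap.flip_apply] at h'
  rw [h', neg_sub]

lemma sPlusOp_apply_eq (hinv : LRinv mul cir (r - TensorProduct.comm K P P r))
    (ξ η : Module.Dual K P) (y : P) :
    sPlusOp mul r ξ η y = - η (mul y (rSkew r ξ) + mul (rSkew r ξ) y) := by
  rw [sPlusOp_apply, ← LinearMap.comp_apply (f := ξ), apply_rSkew, hinv.rSkew_comp_mul]

lemma cPlusOp_apply_eq (hinv : LRinv mul cir (r - TensorProduct.comm K P P r))
    (ξ η : Module.Dual K P) (y : P) :
    cPlusOp cir r ξ η y = η (cir (rSkew r ξ) y - cir y (rSkew r ξ)) := by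
  rw [cPlusOp_apply, ← LinearMap.comp_apply (f := ξ), apply_rSkew, hinv.rSkew_comp_cir, neg_neg]

lemma rSkew_sPlusOp (hinv : LRinv mul cir (r - TensorProduct.comm K P P r))
    (ξ η : Module.Dual K P) :
    rSkew r (sPlusOp mul r ξ η) = - mul (rSkew r ξ) (rSkew r η) := by
  refine Module.eval_apply_injective K (LinearMap.ext fun ψ => ?_)
  simp only [Module.Dual.eval_apply]
  rw [apply_rSkew, hinv.sPlusOp_apply_eq, map_neg, ← LinearMap.comp_apply (f := ψ),
    apply_rSkew, hinv.rSkew_comp_mul, neg_neg, neg_neg, add_comm]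

lemma rSkew_cPlusOp (hinv : LRinv mul cir (r - TensorProduct.comm K P P r))
    (ξ η : Module.Dual K P) :
    rSkew r (cPlusOp cir r ξ η) = - cir (rSkew r ξ) (rSkew r η) := by
  refine Module.eval_apply_injective K (LinearMap.ext fun ψ => ?_)
  simp only [Module.Dual.eval_apply]
  rw [apply_rSkew, hinv.cPlusOp_apply_eq, map_neg, ← LinearMap.comp_apply (f := ψ),
    apply_rSkew, hinv.rSkew_comp_cir, neg_neg, ← map_neg, neg_sub]

lemma sPlusOp_zinbiel (hinv : LRinv mul cir (r - TensorProduct.comm K P P r))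
    (hZin : ∀ x y z : P, mul x (mul y z) = mul (mul x y + mul y x) z)
    (ξ η ζ : Module.Dual K P) :
    sPlusOp mul r ξ (sPlusOp mul r η ζ)
      = sPlusOp mul r (sPlusOp mul r ξ η + sPlusOp mul r η ξ) ζ := by
  ext y
  have left_comm :
      mul y (mul (rSkew r η) (rSkew r ζ)) = mul (rSkew r η) (mul y (rSkew r ζ)) := by
    rw [hZin, hZin, add_comm]
  rw [sPlusOp_apply ξ, hinv.rSkew_sPlusOp, sPlusOp_apply _ ζ, LinearMap.add_apply,
    sPlusOp_apply ξ η, hinv.sPlusOp_apply_eq η ξ]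
  simp only [map_neg, map_add]
  linear_combination -congrArg ξ left_comm

lemma cPlusOp_preLie (hinv : LRinv mul cir (r - TensorProduct.comm K P P r))
    (hPre : ∀ x y z : P,
      cir (cir x y) z - cir x (cir y z) = cir (cir y x) z - cir y (cir x z))
    (ξ η ζ : Module.Dual K P) :
    cPlusOp cir r (cPlusOp cir r ξ η) ζ - cPlusOp cir r ξ (cPlusOp cir r η ζ)
      = cPlusOp cir r (cPlusOp cir r η ξ) ζ - cPlusOp cir r η (cPlusOp cir r ξ ζ) := by
  ext y
  simp only [LinearMap.sub_apply]
  rw [cPlusOp_apply (cPlusOp cir r ξ η) ζ, cPlusOp_apply ξ η,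
    cPlusOp_apply ξ (cPlusOp cir r η ζ), hinv.rSkew_cPlusOp,
    cPlusOp_apply (cPlusOp cir r η ξ) ζ, hinv.cPlusOp_apply_eq η ξ,
    hinv.cPlusOp_apply_eq η (cPlusOp cir r ξ ζ), cPlusOp_apply ξ ζ]
  have h := congrArg ξ (hPre y (rSkew r η) (rSkew r ζ))
  simp only [map_neg, map_sub, LinearMap.sub_apply] at h ⊢
  linear_combination h

lemma sPlusOp_cPlusOp_sub (hinv : LRinv mul cir (r - TensorProduct.comm K P P r))
    (hC1 : ∀ x y z : P,
      mul (cir x y - cir y x) z = cir x (mul y z) - mul y (cir x z))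
    (ξ η ζ : Module.Dual K P) :
    sPlusOp mul r (cPlusOp cir r ξ η - cPlusOp cir r η ξ) ζ
      = cPlusOp cir r ξ (sPlusOp mul r η ζ) - sPlusOp mul r η (cPlusOp cir r ξ ζ) := by
  ext y
  rw [LinearMap.sub_apply, sPlusOp_apply _ ζ, LinearMap.sub_apply, hinv.cPlusOp_apply_eq ξ η,
    cPlusOp_apply η ξ, hinv.cPlusOp_apply_eq ξ (sPlusOp mul r η ζ), sPlusOp_apply η ζ,
    sPlusOp_apply η (cPlusOp cir r ξ ζ), hinv.rSkew_cPlusOp]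
  have h := congrArg η (hC1 (rSkew r ξ) y (rSkew r ζ))
  simp only [map_neg, map_sub, LinearMap.sub_apply] at h ⊢
  linear_combination -h

lemma cPlusOp_sPlusOp_add (hinv : LRinv mul cir (r - TensorProduct.comm K P P r))
    (hC2 : ∀ x y z : P,
      cir (mul x y + mul y x) z = mul x (cir y z) + mul y (cir x z))
    (ξ η ζ : Module.Dual K P) :
    cPlusOp cir r (sPlusOp mul r ξ η + sPlusOp mul r η ξ) ζ
      = sPlusOp mul r ξ (cPlusOp cir r η ζ) + sPlusOp mul r η (cPlusOp cir r ξ ζ) := by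
  ext y
  rw [LinearMap.add_apply, cPlusOp_apply _ ζ, LinearMap.add_apply, sPlusOp_apply ξ η,
    hinv.sPlusOp_apply_eq η ξ, sPlusOp_apply ξ (cPlusOp cir r η ζ), hinv.rSkew_cPlusOp,
    hinv.sPlusOp_apply_eq η (cPlusOp cir r ξ ζ), cPlusOp_apply ξ ζ]
  have h := congrArg ξ (hC2 (rSkew r η) y (rSkew r ζ))
  simp only [map_neg, map_add, LinearMap.add_apply] at h ⊢
  linear_combination -h

end LRinv

theorem dual_prePoisson_of_LRinvariant_general
    (mul cir : P →ₗ[K] P →ₗ[K] P)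
    (hZin : ∀ x y z : P, mul x (mul y z) = mul (mul x y + mul y x) z)
    (hPre : ∀ x y z : P,
      cir (cir x y) z - cir x (cir y z) = cir (cir y x) z - cir y (cir x z))
    (hC1 : ∀ x y z : P,
      mul (cir x y - cir y x) z = cir x (mul y z) - mul y (cir x z))
    (hC2 : ∀ x y z : P,
      cir (mul x y + mul y x) z = mul x (cir y z) + mul y (cir x z))
    (r : P ⊗[K] P)
    (hinv : LRinv mul cir (r - TensorProduct.comm K P P r)) :
    (∀ ξ η ζ : Module.Dual K P,
      sPlusOp mul r ξ (sPlusOp mul r η ζ)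
        = sPlusOp mul r (sPlusOp mul r ξ η + sPlusOp mul r η ξ) ζ) ∧
    (∀ ξ η ζ : Module.Dual K P,
      cPlusOp cir r (cPlusOp cir r ξ η) ζ - cPlusOp cir r ξ (cPlusOp cir r η ζ)
        = cPlusOp cir r (cPlusOp cir r η ξ) ζ - cPlusOp cir r η (cPlusOp cir r ξ ζ)) ∧
    (∀ ξ η ζ : Module.Dual K P,
      sPlusOp mul r (cPlusOp cir r ξ η - cPlusOp cir r η ξ) ζ
        = cPlusOp cir r ξ (sPlusOp mul r η ζ) - sPlusOp mul r η (cPlusOp cir r ξ ζ)) ∧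
    (∀ ξ η ζ : Module.Dual K P,
      cPlusOp cir r (sPlusOp mul r ξ η + sPlusOp mul r η ξ) ζ
        = sPlusOp mul r ξ (cPlusOp cir r η ζ) + sPlusOp mul r η (cPlusOp cir r ξ ζ)) :=
  ⟨hinv.sPlusOp_zinbiel hZin, hinv.cPlusOp_preLie hPre, hinv.sPlusOp_cPlusOp_sub hC1,
    hinv.cPlusOp_sPlusOp_add hC2⟩

/-- If the skew-symmetric part of `r` is `(L,R)`-invariant, then
`(P*, ∗₊, ∘₊)` is a pre-Poisson algebra. -/
theorem dual_prePoisson_of_LRinvariant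
    [FiniteDimensional K P]
    (mul cir : P →ₗ[K] P →ₗ[K] P)
    (hZin : ∀ x y z : P, mul x (mul y z) = mul (mul x y + mul y x) z)
    (hPre : ∀ x y z : P,
      cir (cir x y) z - cir x (cir y z) = cir (cir y x) z - cir y (cir x z))
    (hC1 : ∀ x y z : P,
      mul (cir x y - cir y x) z = cir x (mul y z) - mul y (cir x z))
    (hC2 : ∀ x y z : P,
      cir (mul x y + mul y x) z = mul x (cir y z) + mul y (cir x z))
    (r : P ⊗[K] P)
    (hinv : LRinv mul cir (r - TensorProduct.comm K P P r)) :
    (∀ ξ η ζ : Module.Dual K P,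
      sPlusOp mul r ξ (sPlusOp mul r η ζ)
        = sPlusOp mul r (sPlusOp mul r ξ η + sPlusOp mul r η ξ) ζ) ∧
    (∀ ξ η ζ : Module.Dual K P,
      cPlusOp cir r (cPlusOp cir r ξ η) ζ - cPlusOp cir r ξ (cPlusOp cir r η ζ)
        = cPlusOp cir r (cPlusOp cir r η ξ) ζ - cPlusOp cir r η (cPlusOp cir r ξ ζ)) ∧
    (∀ ξ η ζ : Module.Dual K P,
      sPlusOp mul r (cPlusOp cir r ξ η - cPlusOp cir r η ξ) ζ
        = cPlusOp cir r ξ (sPlusOp mul r η ζ) - sPlusOp mul r η (cPlusOp cir r ξ ζ)) ∧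
    (∀ ξ η ζ : Module.Dual K P,
      cPlusOp cir r (sPlusOp mul r ξ η + sPlusOp mul r η ξ) ζ
        = sPlusOp mul r ξ (cPlusOp cir r η ζ) + sPlusOp mul r η (cPlusOp cir r ξ ζ)) :=
  dual_prePoisson_of_LRinvariant_general mul cir hZin hPre hC1 hC2 r hinv

end
end

section
/- Let (P,·,{·,·}) be a Poisson algebra over a field K with symplectic structure ω, λ ∈ K, and B: P → P a linear map satisfying B(x)·B(y) = B(B(x)·y + x·B(y) + λx·y), {B(x),B(y)} = B({B(x),y} + {x,B(y)} + λ{x,y}), and ω(Bx, y) + ω(x, By) + λω(x,y) = 0 for all x,y (a Rota-Baxter symplectic Poisson algebra of weight λ). Let ∗ and ∘ be the bilinear operations on P determined by ω(x∗y, z) = ω(y, x·z) and ω(x∘y, z) = −ω(y, {x,z}). Then B is a Rota-Baxter operator of weight λ on the pre-Poisson algebra (P,∗,∘), and ω satisfies ω(x∗y, z) = ω(y, x∗z + z∗x) and ω(x∘y, z) = −ω(y, x∘z − z∘x); hence (P,∗,∘,B,ω) is a quadratic Rota-Baxter pre-Poisson algebra of weight λ. -/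
/-!
Nondegeneracy of `ω` makes `x ∗ -` and `x ∘ -` the `ω`-transposes of `x · -` and `-{x, -}`, so
every identity between `∗` and `∘` is the transpose of an identity in the Poisson algebra.
Cyclic invariance of `ω` gives the sub-adjacency relations `x ∗ y + y ∗ x = x · y` and
`x ∘ y - y ∘ x = {x, y}`; associativity, the Jacobi identity and the Leibniz rule then transpose
to the Zinbiel, pre-Lie and compatibility identities. The compatibility of `B` with `ω` says that
`-λ - B` is the `ω`-transpose of `B`, which transports the Rota–Baxter identity of `·` and `{·,·}`
to `∗` and `∘`.
-/

section

variable {K P : Type*} [CommRing K] [AddCommGroup P] [Module K P]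

theorem LinearMap.SeparatingLeft.eq_of_apply_eq {ω : P →ₗ[K] P →ₗ[K] K}
    (hω : ω.SeparatingLeft) {a b : P} (h : ∀ z, ω a z = ω b z) : a = b :=
  sub_eq_zero.mp <| hω _ fun z => by rw [map_sub, LinearMap.sub_apply, h, sub_self]

def IsRotaBaxter (lam : K) (μ : P →ₗ[K] P →ₗ[K] P) (B : P →ₗ[K] P) : Prop :=
  ∀ x y, μ (B x) (B y) = B (μ (B x) y + μ x (B y) + lam • μ x y)

variable {lam : K} {μ σ pmul pbr smul scir : P →ₗ[K] P →ₗ[K] P} {B : P →ₗ[K] P}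
  {ω : P →ₗ[K] P →ₗ[K] K}

theorem IsRotaBaxter.neg (hB : IsRotaBaxter lam μ B) : IsRotaBaxter lam (-μ) B := fun x y => by
  simp only [LinearMap.neg_apply, hB x y, smul_neg, ← neg_add, map_neg]

theorem IsRotaBaxter.of_transpose (hω : ω.SeparatingLeft) (hB : IsRotaBaxter lam μ B)
    (hBω : ∀ x y, ω (B x) y + ω x (B y) + lam * ω x y = 0)
    (hσ : ∀ x y z, ω (σ x y) z = ω y (μ x z)) : IsRotaBaxter lam σ B := fun x y =>
  hω.eq_of_apply_eq fun z => by
    have h₁ := hBω (σ (B x) y + σ x (B y) + lam • σ x y) z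
    have h₂ := hBω y (μ (B x) z + μ x (B z) + lam • μ x z)
    simp only [map_add, map_smul, LinearMap.add_apply, LinearMap.smul_apply, smul_eq_mul,
      hσ, ← hB x z] at h₁ h₂ ⊢
    linear_combination h₂ - h₁

theorem smul_add_smul_swap (hω : ω.SeparatingLeft) (hωalt : ω.IsAlt)
    (hcomm : ∀ x y, pmul x y = pmul y x)
    (hcyc : ∀ x y z, ω (pmul x y) z + ω (pmul y z) x + ω (pmul z x) y = 0)
    (hs : ∀ x y z, ω (smul x y) z = ω y (pmul x z)) (x y : P) :
    smul x y + smul y x = pmul x y :=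
  hω.eq_of_apply_eq fun z => by
    have hcyc' := hcyc x z y
    rw [hcomm z y, hcomm y x] at hcyc'
    rw [map_add, LinearMap.add_apply, hs, hs]
    linear_combination -hωalt.neg (pmul x z) y - hωalt.neg (pmul y z) x - hcyc'

theorem scir_sub_scir_swap (hω : ω.SeparatingLeft) (hωalt : ω.IsAlt) (halt : pbr.IsAlt)
    (hcyc : ∀ x y z, ω (pbr x y) z + ω (pbr y z) x + ω (pbr z x) y = 0)
    (hc : ∀ x y z, ω (scir x y) z = -ω y (pbr x z)) (x y : P) :
    scir x y - scir y x = pbr x y :=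
  hω.eq_of_apply_eq fun z => by
    have hcyc' := hcyc x z y
    rw [← halt.neg y z, ← halt.neg x y, map_neg, LinearMap.neg_apply, map_neg,
      LinearMap.neg_apply] at hcyc'
    rw [map_sub, LinearMap.sub_apply, hc, hc]
    linear_combination hωalt.neg (pbr x z) y - hωalt.neg (pbr y z) x + hcyc'

theorem smul_smul_of_assoc (hω : ω.SeparatingLeft)
    (hassoc : ∀ x y z, pmul (pmul x y) z = pmul x (pmul y z))
    (hs : ∀ x y z, ω (smul x y) z = ω y (pmul x z)) (x y z : P) :
    smul x (smul y z) = smul (pmul y x) z :=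
  hω.eq_of_apply_eq fun w => by rw [hs, hs, hs, hassoc]

theorem bracket_bracket_of_jacobi (halt : pbr.IsAlt)
    (hjac : ∀ x y z, pbr x (pbr y z) + pbr y (pbr z x) + pbr z (pbr x y) = 0) (x y z : P) :
    pbr (pbr x y) z = pbr x (pbr y z) - pbr y (pbr x z) := by
  rw [← halt.neg z (pbr x y), ← halt.neg z x, map_neg, sub_neg_eq_add, neg_eq_iff_add_eq_zero,
    add_comm]
  exact hjac x y z

theorem scir_bracket_of_jacobi (hω : ω.SeparatingLeft) (halt : pbr.IsAlt)
    (hjac : ∀ x y z, pbr x (pbr y z) + pbr y (pbr z x) + pbr z (pbr x y) = 0)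
    (hc : ∀ x y z, ω (scir x y) z = -ω y (pbr x z)) (x y z : P) :
    scir (pbr x y) z = scir x (scir y z) - scir y (scir x z) :=
  hω.eq_of_apply_eq fun w => by
    simp only [map_sub, LinearMap.sub_apply, hc, bracket_bracket_of_jacobi halt hjac]
    ring

theorem smul_bracket_of_leibniz (hω : ω.SeparatingLeft)
    (hleib : ∀ x y z, pbr x (pmul y z) = pmul (pbr x y) z + pmul y (pbr x z))
    (hs : ∀ x y z, ω (smul x y) z = ω y (pmul x z))
    (hc : ∀ x y z, ω (scir x y) z = -ω y (pbr x z)) (x y z : P) :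
    smul (pbr x y) z = scir x (smul y z) - smul y (scir x z) :=
  hω.eq_of_apply_eq fun w => by
    simp only [map_sub, LinearMap.sub_apply, hs, hc, hleib, map_add]
    ring

theorem bracket_mul_of_leibniz (halt : pbr.IsAlt) (hcomm : ∀ x y, pmul x y = pmul y x)
    (hleib : ∀ x y z, pbr x (pmul y z) = pmul (pbr x y) z + pmul y (pbr x z)) (x y z : P) :
    pbr (pmul x y) z = pbr y (pmul x z) + pbr x (pmul y z) := by
  rw [← halt.neg z (pmul x y), hleib z x y, hleib y x z, hleib x y z, ← halt.neg x z,
    ← halt.neg y z, ← halt.neg x y]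
  simp only [map_neg, LinearMap.neg_apply]
  rw [hcomm (pbr x z) y]
  abel

theorem scir_mul_of_leibniz (hω : ω.SeparatingLeft) (halt : pbr.IsAlt)
    (hcomm : ∀ x y, pmul x y = pmul y x)
    (hleib : ∀ x y z, pbr x (pmul y z) = pmul (pbr x y) z + pmul y (pbr x z))
    (hs : ∀ x y z, ω (smul x y) z = ω y (pmul x z))
    (hc : ∀ x y z, ω (scir x y) z = -ω y (pbr x z)) (x y z : P) :
    scir (pmul x y) z = smul x (scir y z) + smul y (scir x z) :=
  hω.eq_of_apply_eq fun w => by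
    simp only [map_add, LinearMap.add_apply, hs, hc, bracket_mul_of_leibniz halt hcomm hleib]
    ring

end

/-- A Rota–Baxter symplectic Poisson algebra of weight `λ` gives
a quadratic Rota–Baxter pre-Poisson algebra of weight `λ` via the operations
determined by the symplectic form. -/
theorem quadratic_prePoisson_of_rotaBaxter_symplectic
    {K : Type*} [Field K] {P : Type*} [AddCommGroup P] [Module K P]
    (lam : K)
    (pmul pbr : P →ₗ[K] P →ₗ[K] P)
    (hcomm : ∀ x y : P, pmul x y = pmul y x)
    (hassoc : ∀ x y z : P, pmul (pmul x y) z = pmul x (pmul y z))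
    (halt : ∀ x : P, pbr x x = 0)
    (hjac : ∀ x y z : P, pbr x (pbr y z) + pbr y (pbr z x) + pbr z (pbr x y) = 0)
    (hleib : ∀ x y z : P, pbr x (pmul y z) = pmul (pbr x y) z + pmul y (pbr x z))
    (ω : P →ₗ[K] P →ₗ[K] K)
    (hωalt : ∀ x : P, ω x x = 0)
    (hωnd : ∀ x : P, (∀ y : P, ω x y = 0) → x = 0)
    (hωcyc1 : ∀ x y z : P, ω (pbr x y) z + ω (pbr y z) x + ω (pbr z x) y = 0)
    (hωcyc2 : ∀ x y z : P, ω (pmul x y) z + ω (pmul y z) x + ω (pmul z x) y = 0)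
    (B : P →ₗ[K] P)
    (hB1 : ∀ x y : P,
      pmul (B x) (B y) = B (pmul (B x) y + pmul x (B y) + lam • pmul x y))
    (hB2 : ∀ x y : P,
      pbr (B x) (B y) = B (pbr (B x) y + pbr x (B y) + lam • pbr x y))
    (hcomp : ∀ x y : P, ω (B x) y + ω x (B y) + lam * ω x y = 0)
    (smul scir : P →ₗ[K] P →ₗ[K] P)
    (hs : ∀ x y z : P, ω (smul x y) z = ω y (pmul x z))
    (hc : ∀ x y z : P, ω (scir x y) z = - ω y (pbr x z)) :
    -- (P, ∗, ∘) is a pre-Poisson algebra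
    (∀ x y z : P, smul x (smul y z) = smul (smul x y + smul y x) z) ∧
    (∀ x y z : P,
      scir (scir x y) z - scir x (scir y z)
        = scir (scir y x) z - scir y (scir x z)) ∧
    (∀ x y z : P,
      smul (scir x y - scir y x) z = scir x (smul y z) - smul y (scir x z)) ∧
    (∀ x y z : P,
      scir (smul x y + smul y x) z = smul x (scir y z) + smul y (scir x z)) ∧
    -- B is a Rota–Baxter operator of weight λ on (P, ∗, ∘)
    (∀ x y : P,
      smul (B x) (B y) = B (smul (B x) y + smul x (B y) + lam • smul x y)) ∧
    (∀ x y : P,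
      scir (B x) (B y) = B (scir (B x) y + scir x (B y) + lam • scir x y)) ∧
    -- ω satisfies the quadratic invariance conditions
    (∀ x y z : P, ω (smul x y) z = ω y (smul x z + smul z x)) ∧
    (∀ x y z : P, ω (scir x y) z = - ω y (scir x z - scir z x)) := by
  have hsub_mul := smul_add_smul_swap hωnd hωalt hcomm hωcyc2 hs
  have hsub_br := scir_sub_scir_swap hωnd hωalt halt hωcyc1 hc
  have hc_neg : ∀ x y z, ω (scir x y) z = ω y ((-pbr) x z) := fun x y z => by
    rw [hc, LinearMap.neg_apply, LinearMap.neg_apply, map_neg]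
  refine ⟨fun x y z => ?_, fun x y z => ?_, fun x y z => ?_, fun x y z => ?_,
    IsRotaBaxter.of_transpose hωnd hB1 hcomp hs,
    IsRotaBaxter.of_transpose hωnd (IsRotaBaxter.neg hB2) hcomp hc_neg,
    fun x y z => by rw [hs, hsub_mul], fun x y z => by rw [hc, hsub_br]⟩
  · rw [hsub_mul, hcomm, smul_smul_of_assoc hωnd hassoc hs]
  · rw [sub_eq_sub_iff_sub_eq_sub, ← LinearMap.sub_apply, ← map_sub, hsub_br,
      scir_bracket_of_jacobi hωnd halt hjac hc]
  · rw [hsub_br, smul_bracket_of_leibniz hωnd hleib hs hc]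
  · rw [hsub_mul, scir_mul_of_leibniz hωnd halt hcomm hleib hs hc]
end

section
/- Let (P,∗,∘) be a pre-Poisson algebra over a field K, λ ∈ K, and B: P → P a Rota-Baxter operator of weight λ. Define x∗_By := B(x)∗y + x∗B(y) + λx∗y and x∘_By := B(x)∘y + x∘B(y) + λx∘y. Then (P, ∗_B, ∘_B) is a pre-Poisson algebra (the descendent pre-Poisson algebra), and B is a homomorphism of pre-Poisson algebras from (P, ∗_B, ∘_B) to (P,∗,∘): B(x∗_By) = B(x)∗B(y) and B(x∘_By) = B(x)∘B(y) for all x,y ∈ P. -/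
/-!
Let `⋆, ⋆'` be products for which `B` is a Rota–Baxter operator. Replacing `B (x ⋆'_B y)` by
`B x ⋆' B y`, both `(x ⋆'_B y) ⋆_B z` and `x ⋆_B (y ⋆'_B z)` expand into the same weighted sum
of the corresponding composition of `⋆` and `⋆'` over the seven ways of applying `B` to at most
two of `x, y, z`: weight `1` for two copies of `B`, `λ` for one and `λ²` for none. Since this
sum is additive in the composition, every identity of the pre-Poisson axioms, read with `x` and
`y` possibly exchanged, passes from `(∗, ∘)` to `(∗_B, ∘_B)`.
-/

namespace LinearMap

variable {K P : Type*} [CommRing K] [AddCommGroup P] [Module K P]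
  (B : P →ₗ[K] P) (lam : K)

def rbDescendent (m : P →ₗ[K] P →ₗ[K] P) : P →ₗ[K] P →ₗ[K] P :=
  m ∘ₗ B + m.compl₂ B + lam • m

@[simp]
theorem rbDescendent_apply (m : P →ₗ[K] P →ₗ[K] P) (x y : P) :
    rbDescendent B lam m x y = m (B x) y + m x (B y) + lam • m x y :=
  rfl

def IsRotaBaxter (m : P →ₗ[K] P →ₗ[K] P) : Prop :=
  ∀ x y, m (B x) (B y) = B (rbDescendent B lam m x y)

def rbWeightedSum (T : P → P → P → P) (x y z : P) : P :=
  T (B x) (B y) z + T (B x) y (B z) + T x (B y) (B z) +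
    lam • (T (B x) y z + T x (B y) z + T x y (B z)) + (lam * lam) • T x y z

variable {B lam}

theorem rbWeightedSum_congr {T₁ T₂ : P → P → P → P} (h : ∀ a b c, T₁ a b c = T₂ a b c)
    (x y z : P) : rbWeightedSum B lam T₁ x y z = rbWeightedSum B lam T₂ x y z := by
  simp only [rbWeightedSum, h]

theorem rbWeightedSum_add_swap (T₁ T₂ : P → P → P → P) (x y z : P) :
    rbWeightedSum B lam T₁ x y z + rbWeightedSum B lam T₂ y x z =
      rbWeightedSum B lam (fun a b c ↦ T₁ a b c + T₂ b a c) x y z := by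
  simp only [rbWeightedSum, smul_add]
  abel

theorem rbWeightedSum_sub_swap (T₁ T₂ : P → P → P → P) (x y z : P) :
    rbWeightedSum B lam T₁ x y z - rbWeightedSum B lam T₂ y x z =
      rbWeightedSum B lam (fun a b c ↦ T₁ a b c - T₂ b a c) x y z := by
  simp only [rbWeightedSum, smul_sub, smul_add]
  abel

variable {m₁ m₂ : P →ₗ[K] P →ₗ[K] P}

theorem rbDescendent_rbDescendent_left (h₂ : IsRotaBaxter B lam m₂) (x y z : P) :
    rbDescendent B lam m₁ (rbDescendent B lam m₂ x y) z =
      rbWeightedSum B lam (fun a b c ↦ m₁ (m₂ a b) c) x y z := by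
  rw [rbDescendent_apply, ← h₂, rbWeightedSum]
  simp only [rbDescendent_apply, map_add, map_smul, add_apply, smul_apply, smul_add, smul_smul]
  abel

theorem rbDescendent_rbDescendent_right (h₂ : IsRotaBaxter B lam m₂) (x y z : P) :
    rbDescendent B lam m₁ x (rbDescendent B lam m₂ y z) =
      rbWeightedSum B lam (fun a b c ↦ m₁ a (m₂ b c)) x y z := by
  rw [rbDescendent_apply, ← h₂, rbWeightedSum]
  simp only [rbDescendent_apply, map_add, map_smul, smul_add, smul_smul]
  abel

variable {m n : P →ₗ[K] P →ₗ[K] P}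

theorem IsRotaBaxter.rbDescendent_zinbiel (hm : IsRotaBaxter B lam m)
    (h : ∀ x y z, m x (m y z) = m (m x y + m y x) z) (x y z : P) :
    rbDescendent B lam m x (rbDescendent B lam m y z) =
      rbDescendent B lam m (rbDescendent B lam m x y + rbDescendent B lam m y x) z := by
  have h' (a b c : P) : m a (m b c) = m (m a b) c + m (m b a) c := by
    rw [h, map_add, add_apply]
  rw [rbDescendent_rbDescendent_right hm, map_add, add_apply, rbDescendent_rbDescendent_left hm,
    rbDescendent_rbDescendent_left hm, rbWeightedSum_add_swap]
  exact rbWeightedSum_congr h' x y z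

theorem IsRotaBaxter.rbDescendent_preLie (hm : IsRotaBaxter B lam m)
    (h : ∀ x y z, m (m x y) z - m x (m y z) = m (m y x) z - m y (m x z)) (x y z : P) :
    rbDescendent B lam m (rbDescendent B lam m x y) z -
        rbDescendent B lam m x (rbDescendent B lam m y z) =
      rbDescendent B lam m (rbDescendent B lam m y x) z -
        rbDescendent B lam m y (rbDescendent B lam m x z) := by
  have h' (a b c : P) : m (m a b) c - m (m b a) c = m a (m b c) - m b (m a c) :=
    sub_eq_sub_iff_sub_eq_sub.mp (h a b c)
  rw [sub_eq_sub_iff_sub_eq_sub, rbDescendent_rbDescendent_left hm,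
    rbDescendent_rbDescendent_left hm, rbDescendent_rbDescendent_right hm,
    rbDescendent_rbDescendent_right hm, rbWeightedSum_sub_swap, rbWeightedSum_sub_swap]
  exact rbWeightedSum_congr h' x y z

theorem IsRotaBaxter.rbDescendent_compat_sub (hm : IsRotaBaxter B lam m)
    (hn : IsRotaBaxter B lam n)
    (h : ∀ x y z, m (n x y - n y x) z = n x (m y z) - m y (n x z)) (x y z : P) :
    rbDescendent B lam m (rbDescendent B lam n x y - rbDescendent B lam n y x) z =
      rbDescendent B lam n x (rbDescendent B lam m y z) -
        rbDescendent B lam m y (rbDescendent B lam n x z) := by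
  have h' (a b c : P) : m (n a b) c - m (n b a) c = n a (m b c) - m b (n a c) := by
    rw [← h, map_sub, sub_apply]
  rw [map_sub, sub_apply, rbDescendent_rbDescendent_left hn, rbDescendent_rbDescendent_left hn,
    rbDescendent_rbDescendent_right hm, rbDescendent_rbDescendent_right hn,
    rbWeightedSum_sub_swap, rbWeightedSum_sub_swap]
  exact rbWeightedSum_congr h' x y z

theorem IsRotaBaxter.rbDescendent_compat_add (hm : IsRotaBaxter B lam m)
    (hn : IsRotaBaxter B lam n)
    (h : ∀ x y z, n (m x y + m y x) z = m x (n y z) + m y (n x z)) (x y z : P) :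
    rbDescendent B lam n (rbDescendent B lam m x y + rbDescendent B lam m y x) z =
      rbDescendent B lam m x (rbDescendent B lam n y z) +
        rbDescendent B lam m y (rbDescendent B lam n x z) := by
  have h' (a b c : P) : n (m a b) c + n (m b a) c = m a (n b c) + m b (n a c) := by
    rw [← h, map_add, add_apply]
  rw [map_add, add_apply, rbDescendent_rbDescendent_left hm, rbDescendent_rbDescendent_left hm,
    rbDescendent_rbDescendent_right hn, rbDescendent_rbDescendent_right hn,
    rbWeightedSum_add_swap, rbWeightedSum_add_swap]
  exact rbWeightedSum_congr h' x y z

end LinearMap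

/-- The descendent operations of a Rota–Baxter operator of weight
`λ` form a pre-Poisson algebra, and `B` is a homomorphism from the descendent
pre-Poisson algebra to the original one. -/
theorem descendent_prePoisson
    {K : Type*} [Field K] {P : Type*} [AddCommGroup P] [Module K P]
    (lam : K)
    (mul cir : P →ₗ[K] P →ₗ[K] P)
    (hZin : ∀ x y z : P, mul x (mul y z) = mul (mul x y + mul y x) z)
    (hPre : ∀ x y z : P,
      cir (cir x y) z - cir x (cir y z) = cir (cir y x) z - cir y (cir x z))
    (hC1 : ∀ x y z : P,
      mul (cir x y - cir y x) z = cir x (mul y z) - mul y (cir x z))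
    (hC2 : ∀ x y z : P,
      cir (mul x y + mul y x) z = mul x (cir y z) + mul y (cir x z))
    (B : P →ₗ[K] P)
    (hB1 : ∀ x y : P,
      mul (B x) (B y) = B (mul (B x) y + mul x (B y) + lam • mul x y))
    (hB2 : ∀ x y : P,
      cir (B x) (B y) = B (cir (B x) y + cir x (B y) + lam • cir x y)) :
    ∀ s c : P → P → P,
      (∀ x y : P, s x y = mul (B x) y + mul x (B y) + lam • mul x y) →
      (∀ x y : P, c x y = cir (B x) y + cir x (B y) + lam • cir x y) →
      (∀ x y z : P, s x (s y z) = s (s x y + s y x) z) ∧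
      (∀ x y z : P, c (c x y) z - c x (c y z) = c (c y x) z - c y (c x z)) ∧
      (∀ x y z : P, s (c x y - c y x) z = c x (s y z) - s y (c x z)) ∧
      (∀ x y z : P, c (s x y + s y x) z = s x (c y z) + s y (c x z)) ∧
      (∀ x y : P, B (s x y) = mul (B x) (B y)) ∧
      (∀ x y : P, B (c x y) = cir (B x) (B y)) := by
  intro s c hs hc
  obtain rfl : s = fun x y ↦ B.rbDescendent lam mul x y := funext₂ hs
  obtain rfl : c = fun x y ↦ B.rbDescendent lam cir x y := funext₂ hc
  have hmul : B.IsRotaBaxter lam mul := hB1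
  have hcir : B.IsRotaBaxter lam cir := hB2
  exact ⟨hmul.rbDescendent_zinbiel hZin, hcir.rbDescendent_preLie hPre,
    hmul.rbDescendent_compat_sub hcir hC1, hmul.rbDescendent_compat_add hcir hC2,
    fun x y ↦ (hmul x y).symm, fun x y ↦ (hcir x y).symm⟩
end
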